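/- arXiv:1003.2374 — 5 statements merged into one kernel-verified Lean document; each statement's English description precedes it below -/
import Mathlib

section
/- Suppose Q satisfies the HSM inequality Q(u) ≥ (∫_Ω W|u|^{2*} dx)^{2/2*} for all u ∈ C_0^∞(Ω) with a positive continuous weight W, and let Ṽ ∈ L^∞_loc(Ω) be a nonzero potential satisfying |Ṽ|^{N/2} W^{(2−N)/2} ∈ L¹(Ω). Then the set S = {λ ∈ ℝ : Q̃_λ(u) = Q(u) + λ∫_Ω Ṽ|u|² dx ≥ 0 for all u ∈ C_0^∞(Ω)} is a closed interval whose interior is nonempty and contains 0. -/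
/-! For a test function `u ≠ 0`, `λ ↦ Q̃_λ(u) = Q(u) + λ ∫ Ṽ|u|²` is affine. Hölder's inequality
with exponents `N/2` and `2*/2`, weighted by `W`, followed by the HSM inequality, bounds its slope:
`|∫ Ṽ|u|²| ≤ C (∫ W|u|^{2*})^{2/2*} ≤ C Q(u)` with `C = (∫ |Ṽ|^{N/2} W^{(2-N)/2})^{2/N}`. Hence `S` is
an intersection of closed half-lines `{λ | Q(u) + λ b_u ≥ 0}` with `|b_u| ≤ C Q(u)`, each containing
`(-(C+1)⁻¹, (C+1)⁻¹)`, so `S` is a closed interval and a neighbourhood of `0`. -/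

open MeasureTheory Filter Topology

noncomputable section

abbrev Euc (N : ℕ) := EuclideanSpace ℝ (Fin N)

/-- `u` is a test function on `Ω`, i.e. `u ∈ C_0^∞(Ω)`. -/
def TestFun {N : ℕ} (Ω : Set (Euc N)) (u : Euc N → ℝ) : Prop :=
  ContDiff ℝ (⊤ : ℕ∞) u ∧ HasCompactSupport u ∧ tsupport u ⊆ Ω

/-- `V ∈ L^∞_loc(Ω)`: `V` is bounded on every compact subset of `Ω`. -/
def LocBdd {N : ℕ} (Ω : Set (Euc N)) (V : Euc N → ℝ) : Prop :=
  ∀ K : Set (Euc N), IsCompact K → K ⊆ Ω → ∃ C : ℝ, ∀ x ∈ K, |V x| ≤ C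

/-- The functional `Q(u) = ∫_Ω (|∇u|^p + V|u|^p) dx`. -/
def Qfun {N : ℕ} (Ω : Set (Euc N)) (V : Euc N → ℝ) (p : ℝ) (u : Euc N → ℝ) : ℝ :=
  ∫ x in Ω, (‖gradient u x‖ ^ p + V x * |u x| ^ p)

/-- The critical Sobolev exponent `p* = pN/(N-p)`. -/
def pStar (p : ℝ) (N : ℕ) : ℝ := p * N / (N - p)

/-- `φ ∈ C¹(Ω)` is a ground state of the functional `Q`: it is an `L^p_loc(Ω)`-limit of a
null sequence, i.e. a sequence of nonnegative test functions `φk` with `Q(φk) → 0` and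
`∫_B |φk|^p dx = 1` for some fixed open set `B` compactly contained in `Ω`. -/
def IsGroundState {N : ℕ} (Ω : Set (Euc N)) (V : Euc N → ℝ) (p : ℝ) (φ : Euc N → ℝ) : Prop :=
  ContDiffOn ℝ 1 φ Ω ∧
  ∃ (φk : ℕ → Euc N → ℝ) (B : Set (Euc N)),
    IsOpen B ∧ B.Nonempty ∧ IsCompact (closure B) ∧ closure B ⊆ Ω ∧
    (∀ k, TestFun Ω (φk k) ∧ ∀ x, 0 ≤ φk k x) ∧
    Tendsto (fun k => Qfun Ω V p (φk k)) atTop (𝓝 0) ∧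
    (∀ k, ∫ x in B, |φk k x| ^ p = 1) ∧
    (∀ K : Set (Euc N), IsCompact K → K ⊆ Ω →
      Tendsto (fun k => ∫ x in K, |φk k x - φ x| ^ p) atTop (𝓝 0))

open Set

section HalfLines

variable {ι : Type*} (a b : ι → ℝ)

theorem isClosed_setOf_forall_nonneg_add_mul : IsClosed {t : ℝ | ∀ i, 0 ≤ a i + t * b i} := by
  simp only [ofPred_forall]
  exact isClosed_iInter fun i => isClosed_le continuous_const (by fun_prop)

theorem ordConnected_setOf_forall_nonneg_add_mul :
    OrdConnected {t : ℝ | ∀ i, 0 ≤ a i + t * b i} := by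
  simp only [ofPred_forall]
  refine ordConnected_iInter fun i => ⟨fun s hs t ht r hr => ?_⟩
  simp only [mem_ofPred_eq] at hs ht ⊢
  rcases le_total 0 (b i) with hb | hb <;> nlinarith [hr.1, hr.2]

theorem zero_mem_interior_setOf_forall_nonneg_add_mul {C : ℝ} (hC : 0 ≤ C)
    (hab : ∀ i, 0 ≤ a i ∧ |b i| ≤ C * a i) :
    (0 : ℝ) ∈ interior {t : ℝ | ∀ i, 0 ≤ a i + t * b i} := by
  refine mem_interior_iff_mem_nhds.2 <|
    Filter.mem_of_superset (Metric.ball_mem_nhds 0 (by positivity : (0 : ℝ) < (C + 1)⁻¹)) ?_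
  intro t ht i
  rw [mem_ball_zero_iff, Real.norm_eq_abs] at ht
  obtain ⟨ha, hb⟩ := hab i
  have hle : |t * b i| ≤ a i := calc
    |t * b i| = |t| * |b i| := abs_mul _ _
    _ ≤ (C + 1)⁻¹ * ((C + 1) * a i) := by gcongr; linarith
    _ = a i := by field_simp
  linarith [neg_abs_le (t * b i)]

end HalfLines

section Holder

variable {α : Type*} [MeasurableSpace α] {μ : Measure α}

theorem memLp_ofReal_of_integrable_rpow {f : α → ℝ} {p : ℝ} (hp : 0 < p) (hf : 0 ≤ᵐ[μ] f)
    (hfp : Integrable (fun x => f x ^ p) μ) : MemLp f (ENNReal.ofReal p) μ := by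
  have hmeas : AEStronglyMeasurable f μ := by
    refine ((Real.continuous_rpow_const (inv_nonneg.2 hp.le)).comp_aestronglyMeasurable
      hfp.aestronglyMeasurable).congr ?_
    filter_upwards [hf] with x hx
    exact Real.rpow_rpow_inv hx hp.ne'
  rw [← integrable_norm_rpow_iff hmeas (by simpa using hp) ENNReal.ofReal_ne_top,
    ENNReal.toReal_ofReal hp.le]
  refine hfp.congr ?_
  filter_upwards [hf] with x hx
  rw [Real.norm_of_nonneg hx]

theorem integral_mul_le_weighted_Lp_mul_Lq_of_nonneg {p q : ℝ} (hpq : p.HolderConjugate q)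
    {f g w : α → ℝ} (hf : 0 ≤ᵐ[μ] f) (hg : 0 ≤ᵐ[μ] g) (hw : ∀ᵐ x ∂μ, 0 < w x)
    (hfw : Integrable (fun x => f x ^ p * w x ^ (1 - p)) μ)
    (hgw : Integrable (fun x => w x * g x ^ q) μ) :
    ∫ x, f x * g x ∂μ ≤
      (∫ x, f x ^ p * w x ^ (1 - p) ∂μ) ^ (1 / p) * (∫ x, w x * g x ^ q ∂μ) ^ (1 / q) := by
  set F := fun x => f x * w x ^ (-q⁻¹)
  set G := fun x => g x * w x ^ q⁻¹
  have hF : 0 ≤ᵐ[μ] F := by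
    filter_upwards [hf, hw] with x hfx hwx
    exact mul_nonneg hfx (Real.rpow_nonneg hwx.le _)
  have hG : 0 ≤ᵐ[μ] G := by
    filter_upwards [hg, hw] with x hgx hwx
    exact mul_nonneg hgx (Real.rpow_nonneg hwx.le _)
  have hFp : (fun x => F x ^ p) =ᵐ[μ] fun x => f x ^ p * w x ^ (1 - p) := by
    filter_upwards [hf, hw] with x hfx hwx
    rw [Real.mul_rpow hfx (Real.rpow_nonneg hwx.le _), ← Real.rpow_mul hwx.le, ← hpq.inv_sub_one,
      sub_mul, inv_mul_cancel₀ hpq.ne_zero, one_mul]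
  have hGq : (fun x => G x ^ q) =ᵐ[μ] fun x => w x * g x ^ q := by
    filter_upwards [hg, hw] with x hgx hwx
    rw [Real.mul_rpow hgx (Real.rpow_nonneg hwx.le _), ← Real.rpow_mul hwx.le,
      inv_mul_cancel₀ hpq.symm.ne_zero, Real.rpow_one, mul_comm]
  have hFG : (fun x => F x * G x) =ᵐ[μ] fun x => f x * g x := by
    filter_upwards [hw] with x hwx
    rw [mul_mul_mul_comm, ← Real.rpow_add hwx, neg_add_cancel, Real.rpow_zero, mul_one]
  have hHolder := integral_mul_le_Lp_mul_Lq_of_nonneg hpq hF hG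
    (memLp_ofReal_of_integrable_rpow hpq.pos hF (hfw.congr hFp.symm))
    (memLp_ofReal_of_integrable_rpow hpq.symm.pos hG (hgw.congr hGq.symm))
  rwa [integral_congr_ae hFG, integral_congr_ae hFp, integral_congr_ae hGq] at hHolder

end Holder

section Functional

variable {N : ℕ} {Ω : Set (Euc N)} {V Vt u : Euc N → ℝ} {p : ℝ}

theorem Qfun_zero (Ω : Set (Euc N)) (V : Euc N → ℝ) (hp : p ≠ 0) :
    Qfun Ω V p 0 = 0 := by
  have hgrad : ∀ x, gradient (0 : Euc N → ℝ) x = 0 := fun x => gradient_fun_const x 0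
  simp [Qfun, hgrad, Real.zero_rpow hp]

theorem Qfun_add_mul_of_integrableOn
    (hA : IntegrableOn (fun x => ‖gradient u x‖ ^ p + V x * |u x| ^ p) Ω)
    (hB : IntegrableOn (fun x => Vt x * |u x| ^ p) Ω) (lam : ℝ) :
    Qfun Ω (fun x => V x + lam * Vt x) p u = Qfun Ω V p u + lam * ∫ x in Ω, Vt x * |u x| ^ p := by
  rw [Qfun, Qfun, ← integral_const_mul, ← integral_add hA (hB.const_mul lam)]
  congr 1
  funext x
  ring

theorem Qfun_add_mul_of_not_integrableOn
    (hA : IntegrableOn (fun x => ‖gradient u x‖ ^ p + V x * |u x| ^ p) Ω)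
    (hB : ¬ IntegrableOn (fun x => Vt x * |u x| ^ p) Ω) {lam : ℝ} (hlam : lam ≠ 0) :
    Qfun Ω (fun x => V x + lam * Vt x) p u = 0 := by
  refine integral_undef fun h => hB ?_
  refine ((h.sub hA).const_mul lam⁻¹).congr (ae_of_all _ fun x => ?_)
  simp only [Pi.sub_apply]
  field_simp
  ring

/-- When `Vt * |u|^p` is not integrable (`Vt` need not be measurable), `Q̃_λ(u)` is the junk
value `0` for every `λ ≠ 0`, and `b = 0` describes the sign of `Q̃_λ(u)` correctly. -/
theorem exists_nonneg_Qfun_add_mul_iff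
    (hA : IntegrableOn (fun x => ‖gradient u x‖ ^ p + V x * |u x| ^ p) Ω)
    (hQ : 0 ≤ Qfun Ω V p u) :
    ∃ b : ℝ, |b| ≤ ∫ x in Ω, |Vt x| * |u x| ^ p ∧
      ∀ lam, 0 ≤ Qfun Ω (fun x => V x + lam * Vt x) p u ↔ 0 ≤ Qfun Ω V p u + lam * b := by
  by_cases hB : IntegrableOn (fun x => Vt x * |u x| ^ p) Ω
  · refine ⟨_, ?_, fun lam => by rw [Qfun_add_mul_of_integrableOn hA hB]⟩
    refine abs_integral_le_integral_abs.trans_eq (integral_congr_ae (ae_of_all _ fun x => ?_))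
    simp only [abs_mul, abs_of_nonneg (Real.rpow_nonneg (abs_nonneg (u x)) p)]
  · refine ⟨0, by simpa using integral_nonneg fun x => by positivity, fun lam => ?_⟩
    rcases eq_or_ne lam 0 with rfl | hlam
    · simp
    · simp [Qfun_add_mul_of_not_integrableOn hA hB hlam, hQ]

end Functional

namespace TestFun

variable {N : ℕ} {Ω : Set (Euc N)} {u W : Euc N → ℝ} {q : ℝ}

theorem eq_zero_of_notMem (hu : TestFun Ω u) {x : Euc N} (hx : x ∉ Ω) : u x = 0 :=
  image_eq_zero_of_notMem_tsupport fun h => hx (hu.2.2 h)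

theorem continuous_mul_abs_rpow (hu : TestFun Ω u) (hΩ : IsOpen Ω) (hW : ContinuousOn W Ω)
    (hq : 0 < q) : Continuous fun x => W x * |u x| ^ q := by
  have hcont : Continuous fun x => |u x| ^ q :=
    hu.1.continuous.abs.rpow_const fun _ => Or.inr hq.le
  refine continuous_of_tsupport fun x hx =>
    (hW.mul hcont.continuousOn).continuousAt (hΩ.mem_nhds (hu.2.2 ?_))
  exact (tsupport_mul_subset_right.trans
    (tsupport_comp_subset (g := fun t : ℝ => |t| ^ q) (by simp [hq.ne']) u)) hx

theorem hasCompactSupport_mul_abs_rpow (hu : TestFun Ω u) (hq : 0 < q) :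
    HasCompactSupport fun x => W x * |u x| ^ q :=
  (hu.2.1.comp_left (g := fun t : ℝ => |t| ^ q) (by simp [hq.ne'])).mul_left

theorem integrableOn_mul_abs_rpow (hu : TestFun Ω u) (hΩ : IsOpen Ω) (hW : ContinuousOn W Ω)
    (hq : 0 < q) : IntegrableOn (fun x => W x * |u x| ^ q) Ω :=
  ((hu.continuous_mul_abs_rpow hΩ hW hq).integrable_of_hasCompactSupport
    (hu.hasCompactSupport_mul_abs_rpow hq)).integrableOn

theorem setIntegral_mul_abs_rpow_pos (hu : TestFun Ω u) (hΩ : IsOpen Ω) (hW : ContinuousOn W Ω)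
    (hWpos : ∀ x ∈ Ω, 0 < W x) (hq : 0 < q) (hu0 : u ≠ 0) :
    0 < ∫ x in Ω, W x * |u x| ^ q := by
  obtain ⟨x₀, hx₀⟩ := Function.ne_iff.1 hu0
  have hx₀Ω : x₀ ∈ Ω := hu.2.2 (subset_tsupport u hx₀)
  rw [setIntegral_eq_integral_of_forall_compl_eq_zero fun x hx => by
    simp [hu.eq_zero_of_notMem hx, hq.ne']]
  refine (hu.continuous_mul_abs_rpow hΩ hW hq).integral_pos_of_hasCompactSupport_nonneg_nonzero
    (hu.hasCompactSupport_mul_abs_rpow hq) (fun x => ?_) (x := x₀)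
    (mul_pos (hWpos x₀ hx₀Ω) (Real.rpow_pos_of_pos (abs_pos.2 hx₀) q)).ne'
  by_cases hx : x ∈ Ω
  · exact mul_nonneg (hWpos x hx).le (by positivity)
  · simp [hu.eq_zero_of_notMem hx, hq.ne']

end TestFun

theorem setIntegral_abs_mul_sq_le {N : ℕ} (hN : 2 < N) {Ω : Set (Euc N)} (hΩ : MeasurableSet Ω)
    {W Vt u : Euc N → ℝ} (hWpos : ∀ x ∈ Ω, 0 < W x)
    (hVtW : IntegrableOn (fun x => |Vt x| ^ ((N : ℝ) / 2) * W x ^ ((2 - (N : ℝ)) / 2)) Ω)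
    (hWu : IntegrableOn (fun x => W x * |u x| ^ pStar 2 N) Ω) :
    ∫ x in Ω, |Vt x| * |u x| ^ (2 : ℝ) ≤
      (∫ x in Ω, |Vt x| ^ ((N : ℝ) / 2) * W x ^ ((2 - (N : ℝ)) / 2)) ^ (2 / (N : ℝ)) *
        (∫ x in Ω, W x * |u x| ^ pStar 2 N) ^ (2 / pStar 2 N) := by
  have hN' : (2 : ℝ) < N := by exact_mod_cast hN
  have hpq : ((N : ℝ) / 2).HolderConjugate (pStar 2 N / 2) := by
    rw [Real.holderConjugate_iff, pStar]
    refine ⟨by linarith, ?_⟩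
    field_simp
    ring
  have hexp : (2 - (N : ℝ)) / 2 = 1 - N / 2 := by ring
  have hsq : ∀ x, W x * (|u x| ^ (2 : ℝ)) ^ (pStar 2 N / 2) = W x * |u x| ^ pStar 2 N :=
    fun x => by rw [← Real.rpow_mul (abs_nonneg _), mul_div_cancel₀ _ two_ne_zero]
  have hHolder := integral_mul_le_weighted_Lp_mul_Lq_of_nonneg hpq
    (f := fun x => |Vt x|) (g := fun x => |u x| ^ (2 : ℝ))
    (ae_of_all _ fun _ => abs_nonneg _) (ae_of_all _ fun _ => by positivity)
    (ae_restrict_of_forall_mem hΩ hWpos) (by simpa only [hexp, IntegrableOn] using hVtW)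
    (by simpa only [hsq, IntegrableOn] using hWu)
  simpa only [hexp, hsq, one_div_div] using hHolder

theorem exists_forall_nonneg_Qfun_add_mul_iff {N : ℕ} (hN : 2 < N) {Ω : Set (Euc N)}
    (hΩo : IsOpen Ω) {V W : Euc N → ℝ} (hWc : ContinuousOn W Ω) (hWpos : ∀ x ∈ Ω, 0 < W x)
    (hHSM : ∀ u : Euc N → ℝ, TestFun Ω u →
      (∫ x in Ω, W x * |u x| ^ pStar 2 N) ^ (2 / pStar 2 N) ≤ Qfun Ω V 2 u)
    {Vt : Euc N → ℝ}
    (hVtW : IntegrableOn (fun x => |Vt x| ^ ((N : ℝ) / 2) * W x ^ ((2 - (N : ℝ)) / 2)) Ω) :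
    ∃ C : ℝ, 0 ≤ C ∧ ∀ u, TestFun Ω u → ∃ a b : ℝ, (0 ≤ a ∧ |b| ≤ C * a) ∧
      ∀ lam, 0 ≤ Qfun Ω (fun x => V x + lam * Vt x) 2 u ↔ 0 ≤ a + lam * b := by
  have hq : 0 < pStar 2 N := by
    have : (2 : ℝ) < N := by exact_mod_cast hN
    unfold pStar
    apply div_pos <;> linarith
  set C := (∫ x in Ω, |Vt x| ^ ((N : ℝ) / 2) * W x ^ ((2 - (N : ℝ)) / 2)) ^ (2 / (N : ℝ))
  have hC : 0 ≤ C := Real.rpow_nonneg (setIntegral_nonneg hΩo.measurableSet fun x hx => by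
    have := hWpos x hx; positivity) _
  refine ⟨C, hC, fun u hu => ?_⟩
  rcases eq_or_ne u 0 with rfl | hu0
  · exact ⟨0, 0, by simp, fun lam => by simp [Qfun_zero _ _ two_ne_zero]⟩
  have hQpos : 0 < Qfun Ω V 2 u :=
    (Real.rpow_pos_of_pos (hu.setIntegral_mul_abs_rpow_pos hΩo hWc hWpos hq hu0) _).trans_le
      (hHSM u hu)
  obtain ⟨b, hb, hiff⟩ :=
    exists_nonneg_Qfun_add_mul_iff (Vt := Vt) (Integrable.of_integral_ne_zero hQpos.ne') hQpos.le
  refine ⟨_, b, ⟨hQpos.le, ?_⟩, hiff⟩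
  calc |b| ≤ ∫ x in Ω, |Vt x| * |u x| ^ (2 : ℝ) := hb
    _ ≤ _ := setIntegral_abs_mul_sq_le hN hΩo.measurableSet hWpos hVtW
      (hu.integrableOn_mul_abs_rpow hΩo hWc hq)
    _ ≤ C * Qfun Ω V 2 u := mul_le_mul_of_nonneg_left (hHSM u hu) hC

theorem statement_5_general {N : ℕ} (hN : 2 < N) (Ω : Set (Euc N)) (hΩo : IsOpen Ω)
    (V : Euc N → ℝ)
    (W : Euc N → ℝ) (hWc : ContinuousOn W Ω) (hWpos : ∀ x ∈ Ω, 0 < W x)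
    (hHSM : ∀ u : Euc N → ℝ, TestFun Ω u →
      (∫ x in Ω, W x * |u x| ^ pStar 2 N) ^ (2 / pStar 2 N) ≤ Qfun Ω V 2 u)
    (Vt : Euc N → ℝ)
    (hVtW : IntegrableOn (fun x => |Vt x| ^ ((N : ℝ) / 2) * W x ^ ((2 - (N : ℝ)) / 2)) Ω) :
    IsClosed {lam : ℝ | ∀ u : Euc N → ℝ, TestFun Ω u →
        0 ≤ Qfun Ω (fun x => V x + lam * Vt x) 2 u} ∧
      Set.OrdConnected {lam : ℝ | ∀ u : Euc N → ℝ, TestFun Ω u →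
        0 ≤ Qfun Ω (fun x => V x + lam * Vt x) 2 u} ∧
      (0 : ℝ) ∈ interior {lam : ℝ | ∀ u : Euc N → ℝ, TestFun Ω u →
        0 ≤ Qfun Ω (fun x => V x + lam * Vt x) 2 u} := by
  obtain ⟨C, hC, hQ⟩ := exists_forall_nonneg_Qfun_add_mul_iff hN hΩo hWc hWpos hHSM hVtW
  choose a b hab hiff using fun u : {u // TestFun Ω u} => hQ u u.2
  have hS : {lam : ℝ | ∀ u : Euc N → ℝ, TestFun Ω u →
      0 ≤ Qfun Ω (fun x => V x + lam * Vt x) 2 u} = {t | ∀ i, 0 ≤ a i + t * b i} := by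
    ext t
    exact ⟨fun h i => (hiff i t).1 (h i.1 i.2), fun h u hu => (hiff ⟨u, hu⟩ t).2 (h _)⟩
  rw [hS]
  exact ⟨isClosed_setOf_forall_nonneg_add_mul a b, ordConnected_setOf_forall_nonneg_add_mul a b,
    zero_mem_interior_setOf_forall_nonneg_add_mul a b hC hab⟩

/-- Theorem 2.7 (iii), first part: under the hypotheses of Theorem 2.7, the set
`S = {λ ∈ ℝ : Q̃_λ ≥ 0 on C_0^∞(Ω)}` is a closed interval whose interior is nonempty and
contains `0`. -/
theorem statement_5 {N : ℕ} (hN : 2 < N) (Ω : Set (Euc N)) (hΩo : IsOpen Ω)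
    (hΩc : IsConnected Ω) (V : Euc N → ℝ) (hV : LocBdd Ω V)
    (W : Euc N → ℝ) (hWc : ContinuousOn W Ω) (hWpos : ∀ x ∈ Ω, 0 < W x)
    (hHSM : ∀ u : Euc N → ℝ, TestFun Ω u →
      (∫ x in Ω, W x * |u x| ^ pStar 2 N) ^ (2 / pStar 2 N) ≤ Qfun Ω V 2 u)
    (Vt : Euc N → ℝ) (hVt : LocBdd Ω Vt)
    (hVtne : ¬ (∀ᵐ x ∂(volume.restrict Ω), Vt x = 0))
    (hVtW : IntegrableOn (fun x => |Vt x| ^ ((N : ℝ) / 2) * W x ^ ((2 - (N : ℝ)) / 2)) Ω) :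
    IsClosed {lam : ℝ | ∀ u : Euc N → ℝ, TestFun Ω u →
        0 ≤ Qfun Ω (fun x => V x + lam * Vt x) 2 u} ∧
      Set.OrdConnected {lam : ℝ | ∀ u : Euc N → ℝ, TestFun Ω u →
        0 ≤ Qfun Ω (fun x => V x + lam * Vt x) 2 u} ∧
      (0 : ℝ) ∈ interior {lam : ℝ | ∀ u : Euc N → ℝ, TestFun Ω u →
        0 ≤ Qfun Ω (fun x => V x + lam * Vt x) 2 u} :=
  statement_5_general hN Ω hΩo V W hWc hWpos hHSM Vt hVtW
end
end

section
/- Let Ω ⊆ ℝ^N be a domain, 1 < p < N, and let Q(u) = ∫_Ω (|∇u|^p + V|u|^p) dx with V ∈ L^∞_loc(Ω) be nonnegative on C_0^∞(Ω). Suppose Q admits a ground state φ, W is a continuous positive function on Ω with φ ∉ L^{p*}(Ω, W dx), and V₁ ∈ L^∞(Ω) is a nonzero nonnegative function with compact support in Ω. Then the functional Q_{V₁}(u) = Q(u) + ∫_Ω V₁|u|^p dx does not satisfy the HSM inequality with weight W: there is no constant C > 0 with Q_{V₁}(u) ≥ C(∫_Ω W|u|^{p*} dx)^{p/p*} for all u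 ∈ C_0^∞(Ω). -/
open MeasureTheory Filter Topology

noncomputable section

/-!
Along a null sequence `φₖ` the right-hand side `Q(φₖ) + ∫ V₁ |φₖ|^p` stays bounded: `Q(φₖ) → 0`,
and `∫ V₁ |φₖ|^p` is controlled by the `L^p` norm of `φₖ` on the compact support of `V₁`, where
`φₖ → φ` in `L^p`. An HSM inequality would then bound `∫_Ω W |φₖ|^{p*}` uniformly in `k`. On each
compact `K ⊆ Ω` some subsequence converges a.e. to `φ`, so Fatou's lemma bounds `∫_K W |φ|^{p*}`
by the same constant; exhausting `Ω` by compact sets puts `φ` in `L^{p*}(Ω, W dx)`.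
-/

open scoped ENNReal

section

variable {α : Type*} [MeasurableSpace α] {μ : Measure α}

theorem norm_rpow_le_two_rpow_mul {E : Type*} [SeminormedAddCommGroup E] {p : ℝ} (hp : 1 ≤ p)
    (x y : E) : ‖x‖ ^ p ≤ 2 ^ (p - 1) * (‖x - y‖ ^ p + ‖y‖ ^ p) := by
  have h : (‖x - y‖ + ‖y‖) ^ p ≤ 2 ^ (p - 1) * (‖x - y‖ ^ p + ‖y‖ ^ p) := by
    exact_mod_cast NNReal.rpow_add_le_mul_rpow_add_rpow ‖x - y‖₊ ‖y‖₊ hp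
  refine le_trans ?_ h
  gcongr
  simpa using norm_add_le (x - y) y

theorem eventually_integral_norm_rpow_le {ι E : Type*} [NormedAddCommGroup E] {l : Filter ι}
    {p : ℝ} (hp : 1 ≤ p) {f : ι → α → E} {g : α → E}
    (hfg : ∀ i, Integrable (fun x => ‖f i x - g x‖ ^ p) μ)
    (hg : Integrable (fun x => ‖g x‖ ^ p) μ)
    (h : Tendsto (fun i => ∫ x, ‖f i x - g x‖ ^ p ∂μ) l (𝓝 0)) :
    ∀ᶠ i in l, ∫ x, ‖f i x‖ ^ p ∂μ ≤ 2 ^ (p - 1) * (1 + ∫ x, ‖g x‖ ^ p ∂μ) := by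
  filter_upwards [h.eventually_le_const zero_lt_one] with i hi
  calc ∫ x, ‖f i x‖ ^ p ∂μ
      ≤ ∫ x, 2 ^ (p - 1) * (‖f i x - g x‖ ^ p + ‖g x‖ ^ p) ∂μ :=
        integral_mono_of_nonneg (ae_of_all _ fun x => by positivity)
          (((hfg i).add hg).const_mul _) (ae_of_all _ fun x => norm_rpow_le_two_rpow_mul hp _ _)
    _ = 2 ^ (p - 1) * (∫ x, ‖f i x - g x‖ ^ p ∂μ + ∫ x, ‖g x‖ ^ p ∂μ) := by
        rw [integral_const_mul, integral_add (hfg i) hg]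
    _ ≤ 2 ^ (p - 1) * (1 + ∫ x, ‖g x‖ ^ p ∂μ) := by gcongr

theorem integral_mul_le_mul_setIntegral {s : Set α} (hs : MeasurableSet s) {f g : α → ℝ} {C : ℝ}
    (hf0 : ∀ x, 0 ≤ f x) (hfC : ∀ x ∈ s, f x ≤ C) (hfs : ∀ x ∉ s, f x = 0)
    (hg0 : ∀ x, 0 ≤ g x) (hg : IntegrableOn g s μ) :
    ∫ x, f x * g x ∂μ ≤ C * ∫ x in s, g x ∂μ := by
  rw [← integral_indicator hs, ← integral_const_mul]
  refine integral_mono_of_nonneg (ae_of_all _ fun x => mul_nonneg (hf0 x) (hg0 x))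
    ((hg.integrable_indicator hs).const_mul C) (ae_of_all _ fun x => ?_)
  by_cases hx : x ∈ s
  · simpa [Set.indicator_of_mem hx] using mul_le_mul_of_nonneg_right (hfC x hx) (hg0 x)
  · simp [Set.indicator_of_notMem hx, hfs x hx]

theorem tendstoInMeasure_of_tendsto_integral_norm_rpow {ι E : Type*} [NormedAddCommGroup E]
    {l : Filter ι} {p : ℝ} (hp : 0 < p) {f : ι → α → E} {g : α → E}
    (hf : ∀ i, AEStronglyMeasurable (f i) μ) (hg : AEStronglyMeasurable g μ)
    (hfg : ∀ i, Integrable (fun x => ‖f i x - g x‖ ^ p) μ)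
    (h : Tendsto (fun i => ∫ x, ‖f i x - g x‖ ^ p ∂μ) l (𝓝 0)) :
    TendstoInMeasure μ f l g := by
  refine tendstoInMeasure_of_tendsto_eLpNorm (p := ENNReal.ofReal p) (by simpa using hp) hf hg ?_
  have hnorm : ∀ i, eLpNorm (f i - g) (ENNReal.ofReal p) μ
      = ENNReal.ofReal (∫ x, ‖f i x - g x‖ ^ p ∂μ) ^ (1 / p) := by
    intro i
    rw [eLpNorm_eq_lintegral_rpow_enorm_toReal (by simpa using hp) ENNReal.ofReal_ne_top,
      ENNReal.toReal_ofReal hp.le, ofReal_integral_eq_lintegral_ofReal (hfg i)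
        (ae_of_all _ fun x => by positivity)]
    simp only [Pi.sub_apply, ← ofReal_norm, ENNReal.ofReal_rpow_of_nonneg (norm_nonneg _) hp.le]
  simp only [hnorm]
  have h1 : Tendsto (fun i => ENNReal.ofReal (∫ x, ‖f i x - g x‖ ^ p ∂μ)) l (𝓝 0) := by
    simpa using ENNReal.tendsto_ofReal h
  simpa [Function.comp_def, hp] using
    (ENNReal.continuous_rpow_const (y := 1 / p)).tendsto 0 |>.comp h1

theorem lintegral_le_of_tendstoInMeasure {E : Type*} [PseudoEMetricSpace E]
    {f : ℕ → α → E} {g : α → E} (hfg : TendstoInMeasure μ f atTop g)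
    {Φ : α → E → ℝ≥0∞} (hΦ : ∀ x, Continuous (Φ x))
    (hmeas : ∀ k, AEMeasurable (fun x => Φ x (f k x)) μ) {B : ℝ≥0∞}
    (hB : ∀ᶠ k in atTop, ∫⁻ x, Φ x (f k x) ∂μ ≤ B) :
    ∫⁻ x, Φ x (g x) ∂μ ≤ B := by
  obtain ⟨ns, hns, hae⟩ := hfg.exists_seq_tendsto_ae
  have hlim : (fun x => Φ x (g x)) =ᵐ[μ] fun x => liminf (fun j => Φ x (f (ns j) x)) atTop := by
    filter_upwards [hae] with x hx
    exact (((hΦ x).tendsto _).comp hx).liminf_eq.symm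
  calc ∫⁻ x, Φ x (g x) ∂μ
      = ∫⁻ x, liminf (fun j => Φ x (f (ns j) x)) atTop ∂μ := lintegral_congr_ae hlim
    _ ≤ liminf (fun j => ∫⁻ x, Φ x (f (ns j) x) ∂μ) atTop :=
        lintegral_liminf_le' fun j => hmeas (ns j)
    _ ≤ B := liminf_le_of_frequently_le' (hns.tendsto_atTop.eventually hB).frequently

end

section

variable {X : Type*} [TopologicalSpace X] [T2Space X] [MeasurableSpace X] [OpensMeasurableSpace X]
  {μ : Measure X} [IsFiniteMeasureOnCompacts μ]

theorem ContinuousOn.integrableOn_of_support_subset_isCompact {E : Type*} [NormedAddCommGroup E]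
    {f : X → E} {U K : Set X} (hf : ContinuousOn f U) (hK : IsCompact K) (hKU : K ⊆ U)
    (hsupp : Function.support f ⊆ K) : IntegrableOn f U μ :=
  ((integrableOn_iff_integrable_of_support_subset hsupp).mp
    ((hf.mono hKU).integrableOn_compact hK)).integrableOn

theorem tendstoInMeasure_restrict_of_continuousOn {ι : Type*} {l : Filter ι} {K : Set X}
    (hK : IsCompact K) {p : ℝ} (hp : 0 < p) {f : ι → X → ℝ} {g : X → ℝ}
    (hf : ∀ i, ContinuousOn (f i) K) (hg : ContinuousOn g K)
    (hfg : Tendsto (fun i => ∫ x in K, |f i x - g x| ^ p ∂μ) l (𝓝 0)) :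
    TendstoInMeasure (μ.restrict K) f l g :=
  tendstoInMeasure_of_tendsto_integral_norm_rpow hp
    (fun i => (hf i).aestronglyMeasurable hK.measurableSet)
    (hg.aestronglyMeasurable hK.measurableSet)
    (fun i => (((hf i).sub hg).norm.rpow_const fun _ _ => Or.inr hp.le).integrableOn_compact hK)
    (by simpa only [Real.norm_eq_abs] using hfg)

theorem exists_eventually_setIntegral_mul_rpow_abs_le {Ω : Set X} {p : ℝ} (hp : 1 ≤ p)
    {V₁ : X → ℝ} {C₀ : ℝ} (hV₁C : ∀ x ∈ Ω, |V₁ x| ≤ C₀) (hV₁nn : ∀ x, 0 ≤ V₁ x)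
    (hV₁supp : HasCompactSupport V₁) (hV₁sub : tsupport V₁ ⊆ Ω) {f : ℕ → X → ℝ} {g : X → ℝ}
    (hf : ∀ k, ContinuousOn (f k) (tsupport V₁)) (hg : ContinuousOn g (tsupport V₁))
    (hfg : Tendsto (fun k => ∫ x in tsupport V₁, |f k x - g x| ^ p ∂μ) atTop (𝓝 0)) :
    ∃ M, ∀ᶠ k in atTop, ∫ x in Ω, V₁ x * |f k x| ^ p ∂μ ≤ M := by
  set S := tsupport V₁
  have hp0 : 0 < p := by linarith
  have hS : MeasurableSet S := isClosed_tsupport V₁ |>.measurableSet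
  have hint : ∀ {u : X → ℝ}, ContinuousOn u S → IntegrableOn (fun x => |u x| ^ p) S μ :=
    fun hu => (hu.abs.rpow_const fun _ _ => Or.inr hp0.le).integrableOn_compact hV₁supp
  refine ⟨|C₀| * (2 ^ (p - 1) * (1 + ∫ x in S, |g x| ^ p ∂μ)), ?_⟩
  have hbound := eventually_integral_norm_rpow_le (μ := μ.restrict S) (f := f) (g := g) hp
    (fun k => by simp only [Real.norm_eq_abs]; exact hint ((hf k).sub hg))
    (by simp only [Real.norm_eq_abs]; exact hint hg)
    (by simpa only [Real.norm_eq_abs] using hfg)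
  filter_upwards [hbound] with k hk
  simp only [Real.norm_eq_abs] at hk
  have hV₁ : ∫ x in Ω, V₁ x * |f k x| ^ p ∂μ ≤ C₀ * ∫ x in S, |f k x| ^ p ∂μ := by
    have h := integral_mul_le_mul_setIntegral (μ := μ.restrict Ω) hS hV₁nn
      (fun x hx => (le_abs_self _).trans (hV₁C x (hV₁sub hx)))
      (fun x hx => image_eq_zero_of_notMem_tsupport hx) (fun x => by positivity)
      (hint (hf k)).restrict
    rwa [Measure.restrict_restrict hS, Set.inter_eq_left.mpr hV₁sub] at h
  have hnn : 0 ≤ ∫ x in S, |f k x| ^ p ∂μ := integral_nonneg fun x => by positivity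
  calc ∫ x in Ω, V₁ x * |f k x| ^ p ∂μ ≤ C₀ * ∫ x in S, |f k x| ^ p ∂μ := hV₁
    _ ≤ |C₀| * ∫ x in S, |f k x| ^ p ∂μ := by gcongr; exact le_abs_self C₀
    _ ≤ _ := by gcongr

end

theorem setLIntegral_le_of_forall_isCompact {X : Type*} [PseudoEMetricSpace X]
    [SigmaCompactSpace X] [MeasurableSpace X] {μ : Measure X} {U : Set X} (hU : IsOpen U)
    {f : X → ℝ≥0∞} {B : ℝ≥0∞} (h : ∀ K, IsCompact K → K ⊆ U → ∫⁻ x in K, f x ∂μ ≤ B) :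
    ∫⁻ x in U, f x ∂μ ≤ B := by
  obtain ⟨F, hFc, hFU, hFun, hFmono⟩ := hU.exists_iUnion_isClosed
  set K : ℕ → Set X := fun n => F n ∩ compactCovering X n
  have hKU : ⋃ n, K n = U := by
    rw [Set.iUnion_inter_of_monotone hFmono (compactCovering_subset X), hFun,
      iUnion_compactCovering, Set.inter_univ]
  have hKmono : Monotone K := fun m n hmn =>
    Set.inter_subset_inter (hFmono hmn) (compactCovering_subset X hmn)
  rw [← hKU, setLIntegral_iUnion_of_directed _ hKmono.directed_le]
  exact iSup_le fun n =>
    h _ ((isCompact_compactCovering X n).inter_left (hFc n)) (Set.inter_subset_left.trans (hFU n))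

theorem setLIntegral_ofReal_mul_rpow_abs_le_of_tendsto {X : Type*} [MetricSpace X]
    [SigmaCompactSpace X] [MeasurableSpace X] [OpensMeasurableSpace X] {μ : Measure X}
    [IsFiniteMeasureOnCompacts μ] {Ω : Set X} (hΩ : IsOpen Ω) {W : X → ℝ} (hW : ContinuousOn W Ω)
    {p q : ℝ} (hp : 0 < p) (hq : 0 ≤ q) {f : ℕ → X → ℝ} {g : X → ℝ}
    (hf : ∀ k, ContinuousOn (f k) Ω) (hg : ContinuousOn g Ω)
    (hfg : ∀ K, IsCompact K → K ⊆ Ω →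
      Tendsto (fun k => ∫ x in K, |f k x - g x| ^ p ∂μ) atTop (𝓝 0))
    {B : ℝ≥0∞} (hB : ∀ᶠ k in atTop, ∫⁻ x in Ω, ENNReal.ofReal (W x * |f k x| ^ q) ∂μ ≤ B) :
    ∫⁻ x in Ω, ENNReal.ofReal (W x * |g x| ^ q) ∂μ ≤ B :=
  setLIntegral_le_of_forall_isCompact hΩ fun K hK hKΩ => lintegral_le_of_tendstoInMeasure
    (tendstoInMeasure_restrict_of_continuousOn hK hp (fun k => (hf k).mono hKΩ) (hg.mono hKΩ)
      (hfg K hK hKΩ))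
    (fun _ => ENNReal.continuous_ofReal.comp
      (continuous_const.mul ((Real.continuous_rpow_const hq).comp continuous_abs)))
    (fun k => ENNReal.measurable_ofReal.comp_aemeasurable
      (((hW.mono hKΩ).mul (((hf k).mono hKΩ).abs.rpow_const fun _ _ => Or.inr hq)).aemeasurable
        hK.measurableSet))
    (hB.mono fun _ hk => (lintegral_mono_set hKΩ).trans hk)

theorem le_rpow_inv_of_mul_rpow_le {C X M r : ℝ} (hC : 0 < C) (hX : 0 ≤ X) (hr : 0 < r)
    (h : C * X ^ r ≤ M) : X ≤ (M / C) ^ r⁻¹ := by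
  have hXr : X ^ r ≤ M / C := by rw [le_div_iff₀' hC]; exact h
  exact (Real.le_rpow_inv_iff_of_pos hX ((Real.rpow_nonneg hX r).trans hXr) hr).mpr hXr

theorem TestFun.integrableOn_mul_rpow_abs {N : ℕ} {Ω : Set (Euc N)} {u : Euc N → ℝ}
    (hu : TestFun Ω u) {W : Euc N → ℝ} (hW : ContinuousOn W Ω) {q : ℝ} (hq : 0 < q) :
    IntegrableOn (fun x => W x * |u x| ^ q) Ω := by
  refine (hW.mul (hu.1.continuous.continuousOn.abs.rpow_const fun _ _ => Or.inr hq.le))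
    |>.integrableOn_of_support_subset_isCompact hu.2.1 hu.2.2 fun x hx => subset_tsupport u ?_
  contrapose! hx
  simp [Function.notMem_support.mp hx, hq.ne']

theorem statement_9_general {N : ℕ} (Ω : Set (Euc N)) (hΩo : IsOpen Ω)
    (V : Euc N → ℝ) (p : ℝ) (hp1 : 1 < p) (hpN : p < N)
    (φ : Euc N → ℝ) (hφ : IsGroundState Ω V p φ)
    (W : Euc N → ℝ) (hWc : ContinuousOn W Ω) (hWpos : ∀ x ∈ Ω, 0 < W x)
    (hφW : ¬ IntegrableOn (fun x => W x * |φ x| ^ pStar p N) Ω)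
    (V₁ : Euc N → ℝ) (hV₁bdd : ∃ C : ℝ, ∀ x ∈ Ω, |V₁ x| ≤ C)
    (hV₁nn : ∀ x, 0 ≤ V₁ x) (hV₁supp : HasCompactSupport V₁) (hV₁sub : tsupport V₁ ⊆ Ω) :
    ¬ ∃ C : ℝ, 0 < C ∧ ∀ u : Euc N → ℝ, TestFun Ω u →
        C * (∫ x in Ω, W x * |u x| ^ pStar p N) ^ (p / pStar p N) ≤
          Qfun Ω V p u + ∫ x in Ω, V₁ x * |u x| ^ p := by
  rintro ⟨C, hC, hHSM⟩
  obtain ⟨hφC1, φk, -, -, -, -, -, hφk, hQ0, -, hLp⟩ := hφ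
  set q := pStar p N
  have hq : 0 < q := div_pos (mul_pos (by linarith) (by linarith)) (by linarith)
  have hφc : ContinuousOn φ Ω := hφC1.continuousOn
  have hφkc : ∀ k, ContinuousOn (φk k) Ω := fun k => (hφk k).1.1.continuous.continuousOn
  have hWu0 : ∀ u : Euc N → ℝ, 0 ≤ᵐ[volume.restrict Ω] fun x => W x * |u x| ^ q := fun _ =>
    ae_restrict_of_forall_mem hΩo.measurableSet fun x hx =>
      mul_nonneg (hWpos x hx).le (by positivity)
  obtain ⟨C₀, hC₀⟩ := hV₁bdd
  obtain ⟨M, hM⟩ := exists_eventually_setIntegral_mul_rpow_abs_le hp1.le hC₀ hV₁nn hV₁supp hV₁sub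
    (fun k => (hφkc k).mono hV₁sub) (hφc.mono hV₁sub) (hLp _ hV₁supp hV₁sub)
  have hLHS : ∀ᶠ k in atTop, ∫⁻ x in Ω, ENNReal.ofReal (W x * |φk k x| ^ q)
      ≤ ENNReal.ofReal (((1 + M) / C) ^ (p / q)⁻¹) := by
    filter_upwards [hM, hQ0.eventually_le_const zero_lt_one] with k hMk hQk
    rw [← ofReal_integral_eq_lintegral_ofReal ((hφk k).1.integrableOn_mul_rpow_abs hWc hq) (hWu0 _)]
    exact ENNReal.ofReal_le_ofReal <| le_rpow_inv_of_mul_rpow_le hC (integral_nonneg_of_ae (hWu0 _))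
      (div_pos (by linarith) hq) ((hHSM _ (hφk k).1).trans (by linarith))
  refine hφW ⟨(hWc.mul (hφc.abs.rpow_const fun _ _ => Or.inr hq.le)).aestronglyMeasurable
    hΩo.measurableSet, ?_⟩
  rw [hasFiniteIntegral_iff_ofReal (hWu0 φ)]
  exact (setLIntegral_ofReal_mul_rpow_abs_le_of_tendsto hΩo hWc (by linarith) hq.le hφkc hφc hLp
    hLHS).trans_lt ENNReal.ofReal_lt_top

/-- Example 2.5 and Remark 2.6: if the nonnegative functional `Q` admits a
ground state `φ`, `W` is a continuous positive function on `Ω` with `φ ∉ L^{p*}(Ω, W dx)`, and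
`V₁ ∈ L^∞(Ω)` is a nonzero nonnegative function with compact support in `Ω`, then the functional
`Q_{V₁}(u) = Q(u) + ∫_Ω V₁|u|^p dx` does not satisfy the HSM inequality with weight `W`. -/
theorem statement_9 {N : ℕ} (Ω : Set (Euc N)) (hΩo : IsOpen Ω) (hΩc : IsConnected Ω)
    (V : Euc N → ℝ) (hV : LocBdd Ω V) (p : ℝ) (hp1 : 1 < p) (hpN : p < N)
    (hQ : ∀ u : Euc N → ℝ, TestFun Ω u → 0 ≤ Qfun Ω V p u)
    (φ : Euc N → ℝ) (hφ : IsGroundState Ω V p φ)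
    (W : Euc N → ℝ) (hWc : ContinuousOn W Ω) (hWpos : ∀ x ∈ Ω, 0 < W x)
    (hφW : ¬ IntegrableOn (fun x => W x * |φ x| ^ pStar p N) Ω)
    (V₁ : Euc N → ℝ) (hV₁bdd : ∃ C : ℝ, ∀ x ∈ Ω, |V₁ x| ≤ C)
    (hV₁nn : ∀ x, 0 ≤ V₁ x) (hV₁supp : HasCompactSupport V₁) (hV₁sub : tsupport V₁ ⊆ Ω)
    (hV₁ne : ¬ (∀ᵐ x ∂(volume.restrict Ω), V₁ x = 0)) :
    ¬ ∃ C : ℝ, 0 < C ∧ ∀ u : Euc N → ℝ, TestFun Ω u →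
        C * (∫ x in Ω, W x * |u x| ^ pStar p N) ^ (p / pStar p N) ≤
          Qfun Ω V p u + ∫ x in Ω, V₁ x * |u x| ^ p :=
  statement_9_general Ω hΩo V p hp1 hpN φ hφ W hWc hWpos hφW V₁ hV₁bdd hV₁nn hV₁supp hV₁sub
end
end

section
/- Let Ω ⊆ ℝ^N be a domain, 1 < p < N, and let Q(u) = ∫_Ω (|∇u|^p + V|u|^p) dx with V ∈ L^∞_loc(Ω) be nonnegative on C_0^∞(Ω). Suppose Q admits a ground state φ and W is a continuous positive function on Ω with φ ∉ L^{p*}(Ω, W dx). Then Q does not satisfy the HSMP inequality with weight W: for every ψ ∈ C_0^∞(Ω) and every constant C > 0 the inequality Q(u) + C|∫_Ω ψu dx|^p ≥ (∫_Ω W|u|^{p*} dx)^{p/p*} fails for some u ∈ C_0^∞(Ω). -/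
open MeasureTheory Filter Topology

noncomputable section

/-!
Along the null sequence `φₖ` the left-hand side stays bounded: `Q(φₖ) → 0`, and `∫ ψ φₖ` is
controlled on `supp ψ` through the `L^p`-convergence `φₖ → φ`. The right-hand side blows up: as
`W |φ|^{p*}` is not integrable, some compact `K ⊆ Ω` carries an arbitrarily large amount of
`∫_K W |φ|^{p*}`, and on a fixed compact set a truncation at a small height `δ` turns
`L^p`-convergence into `∫_K W |φ|^{p*} ≤ 2^{p*} liminf ∫_K W |φₖ|^{p*}`.
-/

namespace Real

lemma add_rpow_le_two_rpow_mul_rpow_add_rpow {a b p : ℝ} (ha : 0 ≤ a) (hb : 0 ≤ b)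
    (hp : 0 ≤ p) : (a + b) ^ p ≤ 2 ^ p * (a ^ p + b ^ p) := calc
  (a + b) ^ p ≤ (2 * max a b) ^ p := by
    rw [two_mul]; gcongr
    · exact le_max_left a b
    · exact le_max_right a b
  _ = 2 ^ p * max (a ^ p) (b ^ p) := by
    rw [mul_rpow zero_le_two (ha.trans (le_max_left a b)), rpow_max ha hb hp]
  _ ≤ 2 ^ p * (a ^ p + b ^ p) := by
    gcongr; exact max_le_add_of_nonneg (rpow_nonneg ha p) (rpow_nonneg hb p)

lemma le_one_add_rpow {t p : ℝ} (ht : 0 ≤ t) (hp : 1 ≤ p) : t ≤ 1 + t ^ p := by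
  rcases le_total t 1 with h | h
  · linarith [rpow_nonneg ht p]
  · linarith [self_le_rpow_of_one_le h hp]

/-- Truncation at height `δ`: where `|a - b| ≤ δ` compare `|b|` with `|a| + δ`, elsewhere
bound `w * |b| ^ q` by `M ≤ M * (|a - b| / δ) ^ p`. -/
lemma mul_abs_rpow_le_split {a b w δ M p q : ℝ} (hp : 0 < p) (hq : 0 ≤ q) (hw : 0 ≤ w)
    (hδ : 0 < δ) (hM : w * |b| ^ q ≤ M) :
    w * |b| ^ q ≤ 2 ^ q * (w * |a| ^ q) + 2 ^ q * δ ^ q * w + M / δ ^ p * |a - b| ^ p := by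
  have hM0 : 0 ≤ M := (mul_nonneg hw (rpow_nonneg (abs_nonneg b) q)).trans hM
  have hδp : 0 < δ ^ p := rpow_pos_of_pos hδ p
  have hpow : 0 ≤ 2 ^ q * (w * |a| ^ q) + 2 ^ q * δ ^ q * w := by positivity
  rcases le_total |a - b| δ with h | h
  · have hb : |b| ≤ |a| + δ := by
      linarith [abs_sub_abs_le_abs_sub b a, abs_sub_comm a b]
    have : |b| ^ q ≤ 2 ^ q * (|a| ^ q + δ ^ q) :=
      (rpow_le_rpow (abs_nonneg b) hb hq).trans
        (add_rpow_le_two_rpow_mul_rpow_add_rpow (abs_nonneg a) hδ.le hq)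
    have : 0 ≤ M / δ ^ p * |a - b| ^ p := by positivity
    nlinarith
  · have : M ≤ M / δ ^ p * |a - b| ^ p := by
      rw [div_mul_eq_mul_div, le_div_iff₀ hδp]
      exact mul_le_mul_of_nonneg_left (rpow_le_rpow hδ.le h hp.le) hM0
    linarith

end Real

open Real

section CompactSet

variable {α : Type*} [TopologicalSpace α] [T2Space α] [MeasurableSpace α]
  [OpensMeasurableSpace α] {μ : Measure α} [IsFiniteMeasureOnCompacts μ] {K : Set α}

lemma IsCompact.exists_eventually_abs_setIntegral_mul_le (hK : IsCompact K) {p : ℝ}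
    (hp : 1 ≤ p) {ψ φ : α → ℝ} {u : ℕ → α → ℝ} (hψ : ContinuousOn ψ K)
    (hφ : ContinuousOn φ K) (hu : ∀ k, ContinuousOn (u k) K)
    (hlim : Tendsto (fun k => ∫ x in K, |u k x - φ x| ^ p ∂μ) atTop (𝓝 0)) :
    ∃ B, ∀ᶠ k in atTop, |∫ x in K, ψ x * u k x ∂μ| ≤ B := by
  obtain ⟨C, hC0, hC⟩ : ∃ C, 0 ≤ C ∧ ∀ x ∈ K, |ψ x| ≤ C :=
    let ⟨C, hC⟩ := hK.exists_bound_of_continuousOn hψ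
    ⟨max C 0, le_max_right C 0, fun x hx => (hC x hx).trans (le_max_left C 0)⟩
  refine ⟨C * (μ.real K + 1 + ∫ x in K, |φ x| ∂μ), ?_⟩
  filter_upwards [hlim.eventually (eventually_le_nhds one_pos)] with k hk
  have hdiff : IntegrableOn (fun x => |u k x - φ x| ^ p) K μ :=
    (((hu k).sub hφ).abs.rpow_const fun _ _ => Or.inr (by linarith)).integrableOn_compact hK
  have hφi : IntegrableOn (fun x => |φ x|) K μ := hφ.abs.integrableOn_compact hK
  have h1 : IntegrableOn (fun _ => (1 : ℝ)) K μ := integrableOn_const hK.measure_ne_top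
  have h1diff : IntegrableOn (fun x => 1 + |u k x - φ x| ^ p) K μ := h1.add hdiff
  have hpoint : ∀ x ∈ K, |ψ x * u k x| ≤ C * (1 + |u k x - φ x| ^ p + |φ x|) := by
    intro x hx
    have hψx : |ψ x| ≤ C := hC x hx
    have hux : |u k x| ≤ 1 + |u k x - φ x| ^ p + |φ x| := by
      linarith [abs_sub_abs_le_abs_sub (u k x) (φ x),
        le_one_add_rpow (abs_nonneg (u k x - φ x)) hp]
    rw [abs_mul]
    exact mul_le_mul hψx hux (abs_nonneg _) hC0
  calc |∫ x in K, ψ x * u k x ∂μ| ≤ ∫ x in K, |ψ x * u k x| ∂μ := abs_integral_le_integral_abs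
    _ ≤ ∫ x in K, C * (1 + |u k x - φ x| ^ p + |φ x|) ∂μ :=
      setIntegral_mono_on ((hψ.mul (hu k)).abs.integrableOn_compact hK)
        (h1diff.add hφi |>.const_mul C)
        hK.measurableSet hpoint
    _ = C * (μ.real K + ∫ x in K, |u k x - φ x| ^ p ∂μ + ∫ x in K, |φ x| ∂μ) := by
      rw [integral_const_mul, integral_add h1diff hφi, integral_add h1 hdiff,
        setIntegral_const, smul_eq_mul, mul_one]
    _ ≤ C * (μ.real K + 1 + ∫ x in K, |φ x| ∂μ) := by gcongr

lemma IsCompact.setIntegral_mul_abs_rpow_le (hK : IsCompact K) {p q δ M : ℝ} (hp : 0 < p)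
    (hq : 0 ≤ q) (hδ : 0 < δ) {W φ u : α → ℝ} (hW : ContinuousOn W K) (hW0 : ∀ x ∈ K, 0 ≤ W x)
    (hφ : ContinuousOn φ K) (hu : ContinuousOn u K) (hM : ∀ x ∈ K, W x * |φ x| ^ q ≤ M) :
    ∫ x in K, W x * |φ x| ^ q ∂μ ≤ 2 ^ q * ∫ x in K, W x * |u x| ^ q ∂μ
      + 2 ^ q * δ ^ q * ∫ x in K, W x ∂μ + M / δ ^ p * ∫ x in K, |u x - φ x| ^ p ∂μ := by
  have hWu : IntegrableOn (fun x => W x * |u x| ^ q) K μ :=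
    (hW.mul (hu.abs.rpow_const fun _ _ => Or.inr hq)).integrableOn_compact hK
  have hWi : IntegrableOn W K μ := hW.integrableOn_compact hK
  have hdiff : IntegrableOn (fun x => |u x - φ x| ^ p) K μ :=
    ((hu.sub hφ).abs.rpow_const fun _ _ => Or.inr hp.le).integrableOn_compact hK
  have hsum : IntegrableOn (fun x => 2 ^ q * (W x * |u x| ^ q) + 2 ^ q * δ ^ q * W x) K μ :=
    (hWu.const_mul _).add (hWi.const_mul _)
  calc ∫ x in K, W x * |φ x| ^ q ∂μ
      ≤ ∫ x in K, 2 ^ q * (W x * |u x| ^ q) + 2 ^ q * δ ^ q * W x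
          + M / δ ^ p * |u x - φ x| ^ p ∂μ :=
        setIntegral_mono_on
          ((hW.mul (hφ.abs.rpow_const fun _ _ => Or.inr hq)).integrableOn_compact hK)
          (hsum.add (hdiff.const_mul _)) hK.measurableSet
          fun x hx => mul_abs_rpow_le_split hp hq (hW0 x hx) hδ (hM x hx)
    _ = _ := by
      rw [integral_add hsum (hdiff.const_mul _), integral_add (hWu.const_mul _) (hWi.const_mul _),
        integral_const_mul, integral_const_mul, integral_const_mul]

lemma IsCompact.eventually_setIntegral_mul_abs_rpow_le (hK : IsCompact K) {p q ε : ℝ}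
    (hp : 0 < p) (hq : 0 < q) (hε : 0 < ε) {W φ : α → ℝ} {u : ℕ → α → ℝ}
    (hW : ContinuousOn W K) (hW0 : ∀ x ∈ K, 0 ≤ W x) (hφ : ContinuousOn φ K)
    (hu : ∀ k, ContinuousOn (u k) K)
    (hlim : Tendsto (fun k => ∫ x in K, |u k x - φ x| ^ p ∂μ) atTop (𝓝 0)) :
    ∀ᶠ k in atTop, ∫ x in K, W x * |φ x| ^ q ∂μ ≤ 2 ^ q * ∫ x in K, W x * |u k x| ^ q ∂μ + ε := by
  obtain ⟨M, hM⟩ := hK.exists_bound_of_continuousOn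
    (hW.mul (hφ.abs.rpow_const fun _ _ => Or.inr hq.le))
  have hδ : Tendsto (fun δ : ℝ => 2 ^ q * δ ^ q * ∫ x in K, W x ∂μ) (𝓝[>] 0) (𝓝 0) := by
    have := (((continuous_rpow_const hq.le).tendsto 0).const_mul (2 ^ q)).mul_const
      (∫ x in K, W x ∂μ)
    rw [zero_rpow hq.ne', mul_zero, zero_mul] at this
    exact this.mono_left nhdsWithin_le_nhds
  obtain ⟨δ, hδε, hδ0⟩ :=
    ((hδ.eventually (gt_mem_nhds (half_pos hε))).and self_mem_nhdsWithin).exists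
  have hlimδ := hlim.const_mul (M / δ ^ p)
  rw [mul_zero] at hlimδ
  filter_upwards [hlimδ.eventually (gt_mem_nhds (half_pos hε))] with k hk
  linarith [hK.setIntegral_mul_abs_rpow_le (μ := μ) hp hq.le hδ0 hW hW0 hφ (hu k)
    fun x hx => (le_norm_self _).trans (hM x hx)]

end CompactSet

section ProperSpace

variable {α : Type*} [MetricSpace α] [ProperSpace α] [MeasurableSpace α]
  [OpensMeasurableSpace α] {μ : Measure α} {Ω : Set α}

theorem IsOpen.exists_isCompact_lt_setIntegral (hΩ : IsOpen Ω) {g : α → ℝ}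
    (hg : LocallyIntegrableOn g Ω μ) (hg0 : ∀ x ∈ Ω, 0 ≤ g x) (hni : ¬ IntegrableOn g Ω μ)
    (L : ℝ) : ∃ K, IsCompact K ∧ K ⊆ Ω ∧ L < ∫ x in K, g x ∂μ := by
  obtain ⟨F, hFc, hFΩ, hFU, hFm⟩ := hΩ.exists_iUnion_isClosed
  set K : ℕ → Set α := fun n => F n ∩ compactCovering α n
  have hK : ∀ n, IsCompact (K n) := fun n => (isCompact_compactCovering α n).inter_left (hFc n)
  have hKΩ : ∀ n, K n ⊆ Ω := fun n => Set.inter_subset_left.trans (hFΩ n)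
  have hcover : AECover (μ.restrict Ω) atTop K := by
    refine aecover_restrict_of_ae_imp hΩ.measurableSet (ae_of_all _ fun x hx => ?_)
      fun n => (hK n).measurableSet
    obtain ⟨m, hm⟩ := Set.mem_iUnion.1 (hFU ▸ hx)
    obtain ⟨n, hn⟩ := exists_mem_compactCovering x
    exact eventually_atTop.2 ⟨max m n, fun j hj =>
      ⟨hFm (le_of_max_le_left hj) hm, compactCovering_subset α (le_of_max_le_right hj) hn⟩⟩
  by_contra! hbound
  refine hni (hcover.integrable_of_integral_bounded_of_nonneg_ae L (fun n => ?_)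
    ((ae_restrict_iff' hΩ.measurableSet).2 (ae_of_all _ hg0))
    (Eventually.of_forall fun n => ?_))
  · rw [IntegrableOn, Measure.restrict_restrict_of_subset (hKΩ n)]
    exact hg.integrableOn_compact_subset (hKΩ n) (hK n)
  · rw [Measure.restrict_restrict_of_subset (hKΩ n)]
    exact hbound (K n) (hK n) (hKΩ n)

variable [IsFiniteMeasureOnCompacts μ]

theorem tendsto_setIntegral_mul_abs_rpow_atTop (hΩ : IsOpen Ω) {p q : ℝ} (hp : 0 < p)
    (hq : 0 < q) {W φ : α → ℝ} {u : ℕ → α → ℝ} (hW : ContinuousOn W Ω)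
    (hW0 : ∀ x ∈ Ω, 0 ≤ W x) (hφ : ContinuousOn φ Ω)
    (hφW : ¬ IntegrableOn (fun x => W x * |φ x| ^ q) Ω μ) (hu : ∀ k, Continuous (u k))
    (hu_supp : ∀ k, HasCompactSupport (u k)) (hu_Ω : ∀ k, tsupport (u k) ⊆ Ω)
    (hlim : ∀ K, IsCompact K → K ⊆ Ω →
      Tendsto (fun k => ∫ x in K, |u k x - φ x| ^ p ∂μ) atTop (𝓝 0)) :
    Tendsto (fun k => ∫ x in Ω, W x * |u k x| ^ q ∂μ) atTop atTop := by
  have hWφ : ContinuousOn (fun x => W x * |φ x| ^ q) Ω :=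
    hW.mul (hφ.abs.rpow_const fun _ _ => Or.inr hq.le)
  have hWu0 : ∀ k, ∀ x ∈ Ω, 0 ≤ W x * |u k x| ^ q := fun k x hx =>
    mul_nonneg (hW0 x hx) (rpow_nonneg (abs_nonneg _) q)
  have hWu : ∀ k, IntegrableOn (fun x => W x * |u k x| ^ q) Ω μ := fun k =>
    ((hW.mono (hu_Ω k)).mul ((hu k).continuousOn.abs.rpow_const fun _ _ => Or.inr hq.le)
      |>.integrableOn_compact (hu_supp k)).of_forall_sdiff_eq_zero hΩ.measurableSet
      fun x hx => show W x * |u k x| ^ q = 0 by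
        rw [image_eq_zero_of_notMem_tsupport hx.2, abs_zero, zero_rpow hq.ne', mul_zero]
  refine tendsto_atTop.2 fun L => ?_
  obtain ⟨K, hK, hKΩ, hKL⟩ := hΩ.exists_isCompact_lt_setIntegral
    (hWφ.locallyIntegrableOn hΩ.measurableSet)
    (fun x hx => mul_nonneg (hW0 x hx) (rpow_nonneg (abs_nonneg _) q)) hφW (2 ^ q * (L + 1))
  filter_upwards [hK.eventually_setIntegral_mul_abs_rpow_le hp hq (rpow_pos_of_pos two_pos q)
    (hW.mono hKΩ) (fun x hx => hW0 x (hKΩ hx)) (hφ.mono hKΩ) (fun k => (hu k).continuousOn)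
    (hlim K hK hKΩ)] with k hk
  have hLK : L < ∫ x in K, W x * |u k x| ^ q ∂μ := by
    have := hKL.trans_le hk
    rw [← mul_add_one] at this
    linarith [lt_of_mul_lt_mul_left this (rpow_nonneg zero_le_two q)]
  exact hLK.le.trans (setIntegral_mono_set (hWu k)
    ((ae_restrict_iff' hΩ.measurableSet).2 (ae_of_all _ (hWu0 k))) hKΩ.eventuallyLE)

end ProperSpace

theorem statement_10_general {N : ℕ} (Ω : Set (Euc N)) (hΩo : IsOpen Ω)
    (V : Euc N → ℝ) (p : ℝ) (hp1 : 1 < p) (hpN : p < N)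
    (φ : Euc N → ℝ) (hφ : IsGroundState Ω V p φ)
    (W : Euc N → ℝ) (hWc : ContinuousOn W Ω) (hWpos : ∀ x ∈ Ω, 0 < W x)
    (hφW : ¬ IntegrableOn (fun x => W x * |φ x| ^ pStar p N) Ω) :
    ∀ ψ : Euc N → ℝ, TestFun Ω ψ → ∀ C : ℝ, 0 < C →
      ∃ u : Euc N → ℝ, TestFun Ω u ∧
        Qfun Ω V p u + C * |∫ x in Ω, ψ x * u x| ^ p <
          (∫ x in Ω, W x * |u x| ^ pStar p N) ^ (p / pStar p N) := by
  intro ψ ⟨hψ, hψ_supp, hψ_Ω⟩ C hC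
  obtain ⟨hφ1, u, -, -, -, -, -, hu, hQu, -, hlim⟩ := hφ
  have hp : 0 < p := by linarith
  have hq : 0 < pStar p N := div_pos (mul_pos hp (by linarith)) (by linarith)
  obtain ⟨b, hb⟩ := hψ_supp.exists_eventually_abs_setIntegral_mul_le hp1.le
    hψ.continuous.continuousOn (hφ1.continuousOn.mono hψ_Ω)
    (fun k => (hu k).1.1.continuous.continuousOn) (hlim _ hψ_supp hψ_Ω)
  have hLHS : ∀ᶠ k in atTop,
      Qfun Ω V p (u k) + C * |∫ x in Ω, ψ x * u k x| ^ p ≤ 1 + C * b ^ p := by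
    filter_upwards [hQu.eventually (eventually_le_nhds one_pos), hb] with k hQk hbk
    rw [setIntegral_eq_of_subset_of_forall_sdiff_eq_zero hΩo.measurableSet hψ_Ω
      fun x hx => by rw [image_eq_zero_of_notMem_tsupport hx.2, zero_mul]]
    gcongr
  have hRHS := (tendsto_rpow_atTop (div_pos hp hq)).comp
    (tendsto_setIntegral_mul_abs_rpow_atTop hΩo hp hq hWc (fun x hx => (hWpos x hx).le)
      hφ1.continuousOn hφW (fun k => (hu k).1.1.continuous) (fun k => (hu k).1.2.1)
      (fun k => (hu k).1.2.2) hlim)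
  obtain ⟨k, hk1, hk2⟩ := (hLHS.and (hRHS.eventually_gt_atTop (1 + C * b ^ p))).exists
  exact ⟨u k, (hu k).1, hk1.trans_lt hk2⟩

/-- Example 2.5 and Remark 2.6, HSMP version: if the nonnegative functional
`Q` admits a ground state `φ` and `W` is a continuous positive function on `Ω` with
`φ ∉ L^{p*}(Ω, W dx)`, then `Q` does not satisfy the HSMP inequality with weight `W`: for every
`ψ ∈ C_0^∞(Ω)` and every `C > 0` the inequality
`Q(u) + C|∫_Ω ψu dx|^p ≥ (∫_Ω W|u|^{p*} dx)^{p/p*}` fails for some `u ∈ C_0^∞(Ω)`. -/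
theorem statement_10 {N : ℕ} (Ω : Set (Euc N)) (hΩo : IsOpen Ω) (hΩc : IsConnected Ω)
    (V : Euc N → ℝ) (hV : LocBdd Ω V) (p : ℝ) (hp1 : 1 < p) (hpN : p < N)
    (hQ : ∀ u : Euc N → ℝ, TestFun Ω u → 0 ≤ Qfun Ω V p u)
    (φ : Euc N → ℝ) (hφ : IsGroundState Ω V p φ)
    (W : Euc N → ℝ) (hWc : ContinuousOn W Ω) (hWpos : ∀ x ∈ Ω, 0 < W x)
    (hφW : ¬ IntegrableOn (fun x => W x * |φ x| ^ pStar p N) Ω) :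
    ∀ ψ : Euc N → ℝ, TestFun Ω ψ → ∀ C : ℝ, 0 < C →
      ∃ u : Euc N → ℝ, TestFun Ω u ∧
        Qfun Ω V p u + C * |∫ x in Ω, ψ x * u x| ^ p <
          (∫ x in Ω, W x * |u x| ^ pStar p N) ^ (p / pStar p N) :=
  statement_10_general Ω hΩo V p hp1 hpN φ hφ W hWc hWpos hφW
end
end

section
/- Let p ≥ 2, let Ω ⊆ ℝ^N be a domain, and let v ∈ C¹(Ω) be a positive solution of −Δ_p(u) + V|u|^{p−2}u = 0 in Ω. Define for nonnegative w ∈ C_0^∞(Ω) the Lagrangian L_v(w) = |v∇w + w∇v|^p − w^p|∇v|^p − p w^{p−1} v |∇v|^{p−2} ∇v·∇w and the simplified Lagrangian L̂_v(w) = v^p|∇w|^p + v²|∇v|^{p−2} w^{p−2}|∇w|². Then there exists a constant c > 0 depending only on p such that c⁻¹ L̂_v(w) ≤ L_v(w) ≤ c L̂_v(w) pointwise in Ω for every nonnegative w ∈ C_0^∞(Ω). -/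
open MeasureTheory Filter Topology

noncomputable section

/-- `v` is a weak supersolution of the Euler-Lagrange equation
`Q'(u) = -Δ_p(u) + V|u|^{p-2}u = 0` in `Ω`. -/
def IsSupersolution {N : ℕ} (Ω : Set (Euc N)) (V : Euc N → ℝ) (p : ℝ) (v : Euc N → ℝ) : Prop :=
  ∀ ψ : Euc N → ℝ, TestFun Ω ψ → (∀ x, 0 ≤ ψ x) →
    0 ≤ ∫ x in Ω, (‖gradient v x‖ ^ (p - 2) * (inner ℝ (gradient v x) (gradient ψ x) : ℝ)
        + V x * |v x| ^ (p - 2) * v x * ψ x)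

/-- `v` is a weak solution of the Euler-Lagrange equation
`Q'(u) = -Δ_p(u) + V|u|^{p-2}u = 0` in `Ω`. -/
def IsSolution {N : ℕ} (Ω : Set (Euc N)) (V : Euc N → ℝ) (p : ℝ) (v : Euc N → ℝ) : Prop :=
  ∀ ψ : Euc N → ℝ, TestFun Ω ψ →
    (∫ x in Ω, (‖gradient v x‖ ^ (p - 2) * (inner ℝ (gradient v x) (gradient ψ x) : ℝ)
        + V x * |v x| ^ (p - 2) * v x * ψ x)) = 0

/-- The Lagrangian `L_v(w) = |v∇w + w∇v|^p - w^p|∇v|^p - p w^{p-1} v |∇v|^{p-2} ∇v·∇w`. -/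
def LagrL {N : ℕ} (p : ℝ) (v w : Euc N → ℝ) (x : Euc N) : ℝ :=
  ‖v x • gradient w x + w x • gradient v x‖ ^ p - w x ^ p * ‖gradient v x‖ ^ p -
    p * w x ^ (p - 1) * v x * ‖gradient v x‖ ^ (p - 2) *
      (inner ℝ (gradient v x) (gradient w x) : ℝ)

/-- The simplified Lagrangian `L̂_v(w) = v^p|∇w|^p + v²|∇v|^{p-2} w^{p-2}|∇w|²`. -/
def LagrLhat {N : ℕ} (p : ℝ) (v w : Euc N → ℝ) (x : Euc N) : ℝ :=
  v x ^ p * ‖gradient w x‖ ^ p +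
    v x ^ 2 * ‖gradient v x‖ ^ (p - 2) * w x ^ (p - 2) * ‖gradient w x‖ ^ 2

/-!
With `b = w∇v` and `a = v∇w` one has `L_v(w) = |b + a|^p - |b|^p - p|b|^{p-2}⟨b, a⟩` and
`L̂_v(w) = |a|^p + |b|^{p-2}|a|²`, so the claim is an inequality between two vectors of an inner
product space. Convexity of `t ↦ t^{p/2}` at `|b|²` gives `L ≥ (p/2)|b|^{p-2}|a|²`, which also
dominates `|a|^p` unless `|b| ≪ |a|`; in that case `|b + a|^p ≈ |a|^p` dominates everything else.
Conversely, `L` exceeds the Taylor remainder `r^p - s^p - p s^{p-1}(r - s)` of `r ↦ r^p`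
(at `r = |b + a|`, `s = |b|`) by at most `(p/2)|b|^{p-2}|a|²`, and since `|r - s| ≤ |a|` that
remainder is at most `p(p-1) max(r, s)^{p-2}|a|²`.
-/

open Real

lemma rpow_sub_two_mul_sq {x : ℝ} (hx : 0 ≤ x) {p : ℝ} (hp : p ≠ 0) :
    x ^ (p - 2) * x ^ 2 = x ^ p := by
  rw [← rpow_natCast, ← rpow_add' hx (by simpa using hp)]
  norm_num

lemma rpow_sub_two_mul_self {x : ℝ} (hx : 0 ≤ x) {p : ℝ} (hp : p ≠ 1) :
    x ^ (p - 2) * x = x ^ (p - 1) := by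
  rw [← rpow_add_one' hx (by contrapose! hp; linarith)]
  ring_nf

lemma sq_rpow {x : ℝ} (hx : 0 ≤ x) (q : ℝ) : (x ^ 2) ^ q = x ^ (2 * q) := by
  rw [← rpow_natCast, ← rpow_mul hx]
  norm_num

lemma tangent_le_rpow {q x y : ℝ} (hq : 1 ≤ q) (hx : 0 ≤ x) (hy : 0 ≤ y) :
    y ^ q + q * y ^ (q - 1) * (x - y) ≤ x ^ q := by
  rcases hy.eq_or_lt with rfl | hy
  · rcases hq.eq_or_lt with rfl | hq
    · simp
    · simp [zero_rpow (by linarith : q ≠ 0), zero_rpow (by linarith : q - 1 ≠ 0),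
        rpow_nonneg hx]
  · have bernoulli := one_add_mul_self_le_rpow_one_add (s := x / y - 1)
      (by linarith [div_nonneg hx hy.le]) hq
    rw [add_sub_cancel, div_rpow hx hy.le, le_div_iff₀ (rpow_pos_of_pos hy q)] at bernoulli
    calc y ^ q + q * y ^ (q - 1) * (x - y)
        = (1 + q * (x / y - 1)) * y ^ q := by
          rw [rpow_sub_one hy.ne']; field_simp
      _ ≤ x ^ q := bernoulli

lemma rpow_sub_rpow_mul_sub_le {q x y : ℝ} (hq : 1 ≤ q) (hx : 0 ≤ x) (hy : 0 ≤ y) :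
    (x ^ q - y ^ q) * (x - y) ≤ q * max x y ^ (q - 1) * (x - y) ^ 2 := by
  wlog hyx : y ≤ x generalizing x y
  · have := this hy hx (by linarith)
    rw [max_comm]
    linarith
  have tangent := tangent_le_rpow hq hy hx
  rw [max_eq_left hyx]
  nlinarith [sub_nonneg.2 hyx]

lemma rpow_sub_rpow_sub_mul_le {p r s : ℝ} (hp : 2 ≤ p) (hr : 0 ≤ r) (hs : 0 ≤ s) :
    r ^ p - s ^ p - p * s ^ (p - 1) * (r - s) ≤ p * (p - 1) * max r s ^ (p - 2) * (r - s) ^ 2 := by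
  have tangent := tangent_le_rpow (by linarith) hs hr (q := p)
  have h := rpow_sub_rpow_mul_sub_le (q := p - 1) (by linarith) hr hs
  rw [show p - 1 - 1 = p - 2 by ring] at h
  linarith [mul_le_mul_of_nonneg_left h (by linarith : 0 ≤ p)]

lemma rpow_le_mul_rpow_of_le_mul {q s t ε : ℝ} (hq : 1 ≤ q) (hs : 0 ≤ s) (ht : 0 ≤ t)
    (hε : 0 ≤ ε) (hε1 : ε ≤ 1) (hst : s ≤ ε * t) : s ^ q ≤ ε * t ^ q :=
  calc s ^ q ≤ (ε * t) ^ q := rpow_le_rpow hs hst (by linarith)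
    _ = ε ^ q * t ^ q := mul_rpow hε ht
    _ ≤ ε * t ^ q := by gcongr; exact rpow_le_self_of_le_one hε hε1 hq

lemma rpow_sub_two_mul_sq_le_of_le_add {p m s t : ℝ} (hp : 2 ≤ p) (hm : 0 ≤ m) (hs : 0 ≤ s)
    (ht : 0 ≤ t) (hmst : m ≤ s + t) :
    m ^ (p - 2) * t ^ 2 ≤ 2 ^ (p - 2) * (t ^ p + s ^ (p - 2) * t ^ 2) := by
  have hp2 : 0 ≤ p - 2 := by linarith
  have hm_max : m ^ (p - 2) ≤ 2 ^ (p - 2) * (s ^ (p - 2) + t ^ (p - 2)) :=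
    calc m ^ (p - 2) ≤ (2 * max s t) ^ (p - 2) :=
          rpow_le_rpow hm (by linarith [le_max_left s t, le_max_right s t]) hp2
      _ = 2 ^ (p - 2) * max (s ^ (p - 2)) (t ^ (p - 2)) := by
          rw [mul_rpow zero_le_two (le_max_of_le_left hs), rpow_max hs ht hp2]
      _ ≤ 2 ^ (p - 2) * (s ^ (p - 2) + t ^ (p - 2)) := by
          gcongr
          exact max_le_add_of_nonneg (rpow_nonneg hs _) (rpow_nonneg ht _)
  calc m ^ (p - 2) * t ^ 2 ≤ 2 ^ (p - 2) * (s ^ (p - 2) + t ^ (p - 2)) * t ^ 2 := by gcongr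
    _ = 2 ^ (p - 2) * (t ^ (p - 2) * t ^ 2 + s ^ (p - 2) * t ^ 2) := by ring
    _ = 2 ^ (p - 2) * (t ^ p + s ^ (p - 2) * t ^ 2) := by
        rw [rpow_sub_two_mul_sq ht (by linarith)]

open scoped RealInnerProductSpace

section Lagrangian

variable {E : Type*} [NormedAddCommGroup E] [InnerProductSpace ℝ E]

def pLagrangian (p : ℝ) (b a : E) : ℝ :=
  ‖b + a‖ ^ p - ‖b‖ ^ p - p * ‖b‖ ^ (p - 2) * ⟪b, a⟫

def pLagrangianHat (p : ℝ) (b a : E) : ℝ :=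
  ‖a‖ ^ p + ‖b‖ ^ (p - 2) * ‖a‖ ^ 2

lemma pLagrangian_eq (p : ℝ) (b a : E) :
    pLagrangian p b a = ‖b + a‖ ^ p - ‖b‖ ^ p - p / 2 * ‖b‖ ^ (p - 2) * (‖b + a‖ ^ 2 - ‖b‖ ^ 2)
      + p / 2 * (‖b‖ ^ (p - 2) * ‖a‖ ^ 2) := by
  rw [pLagrangian, norm_add_sq_real]
  ring

variable {p : ℝ}

lemma half_mul_le_pLagrangian (hp : 2 ≤ p) (b a : E) :
    p / 2 * (‖b‖ ^ (p - 2) * ‖a‖ ^ 2) ≤ pLagrangian p b a := by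
  have convex := tangent_le_rpow (q := p / 2) (by linarith) (sq_nonneg ‖b + a‖)
    (sq_nonneg ‖b‖)
  rw [sq_rpow (norm_nonneg _), sq_rpow (norm_nonneg _), sq_rpow (norm_nonneg _),
    show 2 * (p / 2) = p by ring, show 2 * (p / 2 - 1) = p - 2 by ring] at convex
  rw [pLagrangian_eq]
  linarith

lemma pLagrangian_ge_of_norm_le_mul {ε : ℝ} (hp : 2 ≤ p) (hε : 0 ≤ ε) (hε1 : ε ≤ 1) {b a : E}
    (hba : ‖b‖ ≤ ε * ‖a‖) : (1 - (2 * p + 1) * ε) * ‖a‖ ^ p ≤ pLagrangian p b a := by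
  set s := ‖b‖
  set t := ‖a‖
  have hs : 0 ≤ s := norm_nonneg b
  have ht : 0 ≤ t := norm_nonneg a
  have hr : (1 - ε) * t ≤ ‖b + a‖ := by
    have := norm_sub_le (b + a) b
    rw [add_sub_cancel_left] at this
    linarith
  have bernoulli : 1 - p * ε ≤ (1 - ε) ^ p := by
    have := one_add_mul_self_le_rpow_one_add (s := -ε) (by linarith) (by linarith : 1 ≤ p)
    rwa [← sub_eq_add_neg, mul_neg, ← sub_eq_add_neg] at this
  have main_term : (1 - p * ε) * t ^ p ≤ ‖b + a‖ ^ p :=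
    calc (1 - p * ε) * t ^ p ≤ (1 - ε) ^ p * t ^ p := by gcongr
      _ = ((1 - ε) * t) ^ p := (mul_rpow (by linarith) ht).symm
      _ ≤ ‖b + a‖ ^ p := rpow_le_rpow (by nlinarith) hr (by linarith)
  have small_term : s ^ p ≤ ε * t ^ p :=
    rpow_le_mul_rpow_of_le_mul (by linarith) hs ht hε hε1 hba
  have cross_term : s ^ (p - 2) * ⟪b, a⟫ ≤ ε * t ^ p :=
    calc s ^ (p - 2) * ⟪b, a⟫ ≤ s ^ (p - 2) * (s * t) := by
          gcongr; exact real_inner_le_norm b a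
      _ = s ^ (p - 1) * t := by rw [← rpow_sub_two_mul_self hs (by linarith)]; ring
      _ ≤ ε * t ^ (p - 1) * t := by
          gcongr; exact rpow_le_mul_rpow_of_le_mul (by linarith) hs ht hε hε1 hba
      _ = ε * t ^ p := by rw [mul_assoc, ← rpow_add_one' ht (by linarith)]; ring_nf
  have p_cross_term := mul_le_mul_of_nonneg_left cross_term (by linarith : 0 ≤ p)
  rw [pLagrangian]
  linarith

lemma pLagrangian_le (hp : 2 ≤ p) (b a : E) :
    pLagrangian p b a ≤ (p * (p - 1) * 2 ^ (p - 2) + p / 2) * pLagrangianHat p b a := by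
  rw [pLagrangian_eq, pLagrangianHat]
  set r := ‖b + a‖
  set s := ‖b‖
  set t := ‖a‖
  have hs : 0 ≤ s := norm_nonneg b
  have ht : 0 ≤ t := norm_nonneg a
  have hr : 0 ≤ r := norm_nonneg (b + a)
  have hrs : |r - s| ≤ t := by simpa using abs_norm_sub_norm_le (b + a) b
  have hmax : max r s ≤ s + t := max_le (by linarith [norm_add_le b a]) (by linarith)
  have taylor := rpow_sub_rpow_sub_mul_le hp hr hs
  have hmax_sq : max r s ^ (p - 2) * (r - s) ^ 2 ≤ max r s ^ (p - 2) * t ^ 2 :=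
    mul_le_mul_of_nonneg_left (sq_le_sq' (abs_le.1 hrs).1 (abs_le.1 hrs).2)
      (rpow_nonneg (le_max_of_le_right hs) _)
  have hmax_hat := rpow_sub_two_mul_sq_le_of_le_add hp (le_max_of_le_right hs) hs ht hmax
  have hsplit : r ^ p - s ^ p - p / 2 * s ^ (p - 2) * (r ^ 2 - s ^ 2)
      = r ^ p - s ^ p - p * s ^ (p - 1) * (r - s) - p / 2 * s ^ (p - 2) * (r - s) ^ 2 := by
    rw [← rpow_sub_two_mul_self hs (by linarith)]; ring
  have remainder := mul_le_mul_of_nonneg_left (hmax_sq.trans hmax_hat)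
    (by nlinarith : 0 ≤ p * (p - 1))
  have hp0 : 0 ≤ p / 2 := by linarith
  rw [hsplit]
  linarith [mul_nonneg hp0 (mul_nonneg (rpow_nonneg hs (p - 2)) (sq_nonneg (r - s))),
    mul_nonneg hp0 (rpow_nonneg ht p)]

end Lagrangian

section Comparability

variable {p : ℝ}

lemma exists_mul_rpow_le_pLagrangian (hp : 2 ≤ p) :
    ∃ c > 0, ∀ (E : Type*) [NormedAddCommGroup E] [InnerProductSpace ℝ E] (b a : E),
      c * ‖a‖ ^ p ≤ pLagrangian p b a := by
  -- chosen so that `1 - (2p + 1)ε = 1/2` in the case `‖b‖ < ε‖a‖`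
  set ε := 1 / (4 * p + 2)
  have hε : 0 < ε := by positivity
  have hε1 : ε ≤ 1 := by rw [div_le_one (by linarith)]; linarith
  refine ⟨min (p / 2 * ε ^ (p - 2)) (1 / 2), lt_min (by positivity) one_half_pos,
    fun E _ _ b a ↦ ?_⟩
  have ht := norm_nonneg a
  rcases le_or_gt (ε * ‖a‖) ‖b‖ with hab | hba
  · calc min (p / 2 * ε ^ (p - 2)) (1 / 2) * ‖a‖ ^ p ≤ p / 2 * ε ^ (p - 2) * ‖a‖ ^ p := by
          gcongr; exact min_le_left _ _
      _ = p / 2 * ((ε * ‖a‖) ^ (p - 2) * ‖a‖ ^ 2) := by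
          rw [mul_rpow hε.le ht, mul_assoc (ε ^ _), rpow_sub_two_mul_sq ht (by linarith)]; ring
      _ ≤ p / 2 * (‖b‖ ^ (p - 2) * ‖a‖ ^ 2) := by
          gcongr
      _ ≤ pLagrangian p b a := half_mul_le_pLagrangian hp b a
  · calc min (p / 2 * ε ^ (p - 2)) (1 / 2) * ‖a‖ ^ p ≤ (1 - (2 * p + 1) * ε) * ‖a‖ ^ p := by
          gcongr
          rw [show (1 : ℝ) - (2 * p + 1) * ε = 1 / 2 by simp only [ε]; field_simp; ring]
          exact min_le_right _ _
      _ ≤ pLagrangian p b a := pLagrangian_ge_of_norm_le_mul hp hε.le hε1 hba.le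

lemma exists_pLagrangian_comparable (hp : 2 ≤ p) :
    ∃ c > 0, ∀ (E : Type*) [NormedAddCommGroup E] [InnerProductSpace ℝ E] (b a : E),
      c⁻¹ * pLagrangianHat p b a ≤ pLagrangian p b a ∧
      pLagrangian p b a ≤ c * pLagrangianHat p b a := by
  obtain ⟨c₀, hc₀, hlow⟩ := exists_mul_rpow_le_pLagrangian hp
  have hκ : 0 < min c₀ 1 / 2 := by positivity
  set C := p * (p - 1) * 2 ^ (p - 2) + p / 2
  refine ⟨max C (min c₀ 1 / 2)⁻¹, lt_max_of_lt_right (inv_pos.2 hκ),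
    fun E _ _ b a ↦ ?_⟩
  have hat_nonneg : 0 ≤ pLagrangianHat p b a := by unfold pLagrangianHat; positivity
  constructor
  · have hκ_hat : min c₀ 1 / 2 * pLagrangianHat p b a ≤ pLagrangian p b a := by
      have : min c₀ 1 * ‖a‖ ^ p ≤ c₀ * ‖a‖ ^ p := by gcongr; exact min_le_left _ _
      have : min c₀ 1 * (‖b‖ ^ (p - 2) * ‖a‖ ^ 2) ≤ p / 2 * (‖b‖ ^ (p - 2) * ‖a‖ ^ 2) := by
        gcongr; linarith [min_le_right c₀ 1]
      unfold pLagrangianHat; linarith [hlow E b a, half_mul_le_pLagrangian hp b a]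
    calc (max C (min c₀ 1 / 2)⁻¹)⁻¹ * pLagrangianHat p b a
        ≤ min c₀ 1 / 2 * pLagrangianHat p b a := by
          gcongr; rw [inv_le_comm₀ (by positivity) hκ]; exact le_max_right _ _
      _ ≤ pLagrangian p b a := hκ_hat
  · calc pLagrangian p b a ≤ C * pLagrangianHat p b a := pLagrangian_le hp b a
      _ ≤ max C (min c₀ 1 / 2)⁻¹ * pLagrangianHat p b a := by gcongr; exact le_max_left _ _

end Comparability

section Bridge

variable {N : ℕ} {p : ℝ} {v w : Euc N → ℝ} {x : Euc N}

lemma LagrL_eq_pLagrangian (hp : p ≠ 1) (hw : 0 ≤ w x) :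
    LagrL p v w x = pLagrangian p (w x • gradient v x) (v x • gradient w x) := by
  rw [LagrL, pLagrangian, add_comm, norm_smul, Real.norm_of_nonneg hw,
    mul_rpow hw (norm_nonneg _), mul_rpow hw (norm_nonneg _), real_inner_smul_left,
    real_inner_smul_right, ← rpow_sub_two_mul_self hw hp]
  ring

lemma LagrLhat_eq_pLagrangianHat (hv : 0 ≤ v x) (hw : 0 ≤ w x) :
    LagrLhat p v w x = pLagrangianHat p (w x • gradient v x) (v x • gradient w x) := by
  rw [LagrLhat, pLagrangianHat, norm_smul, norm_smul, Real.norm_of_nonneg hw,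
    Real.norm_of_nonneg hv, mul_rpow hv (norm_nonneg _), mul_rpow hw (norm_nonneg _)]
  ring

end Bridge

/-- Proposition 4.1, (4.4): for `p ≥ 2` there is `c > 0` depending only on
`p` such that for every domain `Ω ⊆ ℝ^N`, every positive solution `v ∈ C¹(Ω)` of
`-Δ_p u + V|u|^{p-2}u = 0` in `Ω` and every nonnegative `w ∈ C_0^∞(Ω)`,
`c⁻¹ L̂_v(w) ≤ L_v(w) ≤ c L̂_v(w)` pointwise in `Ω`. -/
theorem statement_16 (p : ℝ) (hp2 : 2 ≤ p) :
    ∃ c : ℝ, 0 < c ∧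
      ∀ (N : ℕ) (Ω : Set (Euc N)), IsOpen Ω → IsConnected Ω →
        ∀ V : Euc N → ℝ, LocBdd Ω V →
          ∀ v : Euc N → ℝ, ContDiffOn ℝ 1 v Ω → (∀ x ∈ Ω, 0 < v x) → IsSolution Ω V p v →
            ∀ w : Euc N → ℝ, TestFun Ω w → (∀ x, 0 ≤ w x) →
              ∀ x ∈ Ω,
                c⁻¹ * LagrLhat p v w x ≤ LagrL p v w x ∧
                LagrL p v w x ≤ c * LagrLhat p v w x := by
  obtain ⟨c, hc, comparable⟩ := exists_pLagrangian_comparable hp2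
  refine ⟨c, hc, fun N Ω _ _ V _ v _ hv_pos _ w _ hw_nonneg x hx ↦ ?_⟩
  rw [LagrL_eq_pLagrangian (by linarith) (hw_nonneg x),
    LagrLhat_eq_pLagrangianHat (hv_pos x hx).le (hw_nonneg x)]
  exact comparable _ _ _
end
end

section
/- Let p ≥ 2, let w₀, w₁ be nonnegative C¹ functions on a domain Ω ⊆ ℝ^N, let t ∈ [0,1], and set w_t = ((1−t)w₀^{p/2} + t w₁^{p/2})^{2/p}. Then pointwise on the set where w_t is differentiable, |∇w_t|^{p/2} ≤ (1−t)|∇w₀|^{p/2} + t|∇w₁|^{p/2}; consequently also |∇w_t|^p ≤ (1−t)|∇w₀|^p + t|∇w₁|^p. -/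
open MeasureTheory Filter Topology

noncomputable section

/-! Write `s = p/2 ≥ 1`, so that `w_tˢ = (1-t) w₀ˢ + t w₁ˢ` near the point. Differentiating,
`s w_tˢ⁻¹ ∇w_t = (1-t) s w₀ˢ⁻¹ ∇w₀ + t s w₁ˢ⁻¹ ∇w₁`. Where `w_t > 0`, Hölder's inequality with
exponents `s/(s-1)` and `s` bounds the norm of the right-hand side by
`s w_tˢ⁻¹ ((1-t)|∇w₀|ˢ + t|∇w₁|ˢ)^{1/s}`; where `w_t = 0` it attains a local minimum, so
`∇w_t = 0`. The bound for the `p`-th powers follows by convexity of `y ↦ y²`. -/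

open Finset in
theorem sum_mul_rpow_sub_one_mul_le {ι : Type*} (I : Finset ι) {r : ℝ} (hr : 1 ≤ r)
    {w a b : ι → ℝ} (hw : ∀ i ∈ I, 0 ≤ w i) (ha : ∀ i ∈ I, 0 ≤ a i) (hb : ∀ i ∈ I, 0 ≤ b i) :
    ∑ i ∈ I, w i * a i ^ (r - 1) * b i ≤
      (∑ i ∈ I, w i * a i ^ r) ^ ((r - 1) / r) * (∑ i ∈ I, w i * b i ^ r) ^ (1 / r) := by
  rcases hr.eq_or_lt with rfl | hr
  · simp
  have hr0 : 0 < r := by linarith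
  have hr1 : r - 1 ≠ 0 := sub_ne_zero.2 hr.ne'
  have hexp : (r - 1) / r + 1 / r = 1 := by field_simp; ring
  have hconj : (r / (r - 1)).HolderConjugate r := (Real.HolderConjugate.conjExponent hr).symm
  calc ∑ i ∈ I, w i * a i ^ (r - 1) * b i
      = ∑ i ∈ I, (w i ^ ((r - 1) / r) * a i ^ (r - 1)) * (w i ^ (1 / r) * b i) := by
        refine sum_congr rfl fun i hi => ?_
        rw [mul_mul_mul_comm, ← Real.rpow_add' (hw i hi) (by rw [hexp]; exact one_ne_zero), hexp,
          Real.rpow_one, mul_assoc]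
    _ ≤ (∑ i ∈ I, (w i ^ ((r - 1) / r) * a i ^ (r - 1)) ^ (r / (r - 1))) ^ (1 / (r / (r - 1))) *
          (∑ i ∈ I, (w i ^ (1 / r) * b i) ^ r) ^ (1 / r) :=
        Real.inner_le_Lp_mul_Lq_of_nonneg I hconj
          (fun i hi => by have := hw i hi; have := ha i hi; positivity)
          (fun i hi => by have := hw i hi; have := hb i hi; positivity)
    _ = _ := by
        rw [one_div_div]
        congr 2 <;> refine sum_congr rfl fun i hi => ?_
        · rw [Real.mul_rpow (by have := hw i hi; positivity) (by have := ha i hi; positivity),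
            ← Real.rpow_mul (hw i hi), ← Real.rpow_mul (ha i hi),
            div_mul_div_cancel₀ hr0.ne', div_self hr1, Real.rpow_one,
            mul_div_cancel₀ _ hr1]
        · rw [Real.mul_rpow (by have := hw i hi; positivity) (hb i hi),
            ← Real.rpow_mul (hw i hi), one_div_mul_cancel hr0.ne', Real.rpow_one]

theorem rpow_le_of_rpow_sub_one_mul_le {s μ ν a b A B F D : ℝ} (hs : 1 ≤ s) (hμ : 0 ≤ μ)
    (hν : 0 ≤ ν) (ha : 0 ≤ a) (hb : 0 ≤ b) (hA : 0 ≤ A) (hB : 0 ≤ B) (hD : 0 ≤ D) (hF : 0 < F)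
    (hFs : F ^ s = μ * a ^ s + ν * b ^ s)
    (h : F ^ (s - 1) * D ≤ μ * a ^ (s - 1) * A + ν * b ^ (s - 1) * B) :
    D ^ s ≤ μ * A ^ s + ν * B ^ s := by
  have hs0 : 0 < s := by linarith
  have hZ : 0 ≤ μ * A ^ s + ν * B ^ s := by positivity
  have holder := sum_mul_rpow_sub_one_mul_le Finset.univ hs (w := ![μ, ν]) (a := ![a, b])
    (b := ![A, B]) (by simp [Fin.forall_fin_two, hμ, hν]) (by simp [Fin.forall_fin_two, ha, hb])
    (by simp [Fin.forall_fin_two, hA, hB])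
  simp only [Fin.sum_univ_two, Matrix.cons_val_zero, Matrix.cons_val_one] at holder
  rw [← hFs, ← Real.rpow_mul hF.le, mul_div_cancel₀ _ hs0.ne'] at holder
  have hDZ : D ≤ (μ * A ^ s + ν * B ^ s) ^ (1 / s) :=
    le_of_mul_le_mul_left (h.trans holder) (Real.rpow_pos_of_pos hF _)
  calc D ^ s ≤ ((μ * A ^ s + ν * B ^ s) ^ (1 / s)) ^ s := Real.rpow_le_rpow hD hDZ hs0.le
    _ = μ * A ^ s + ν * B ^ s := by
      rw [← Real.rpow_mul hZ, one_div_mul_cancel hs0.ne', Real.rpow_one]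

theorem rpow_le_convexCombination_of_rpow_le {X A B t s r q : ℝ} (hr : 1 ≤ r) (hq : q = s * r)
    (ht : t ∈ Set.Icc (0 : ℝ) 1) (hX : 0 ≤ X) (hA : 0 ≤ A) (hB : 0 ≤ B)
    (h : X ^ s ≤ (1 - t) * A ^ s + t * B ^ s) :
    X ^ q ≤ (1 - t) * A ^ q + t * B ^ q := by
  subst hq
  simp only [Real.rpow_mul hX, Real.rpow_mul hA, Real.rpow_mul hB]
  calc (X ^ s) ^ r ≤ ((1 - t) * A ^ s + t * B ^ s) ^ r :=
        Real.rpow_le_rpow (by positivity) h (by linarith)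
    _ ≤ (1 - t) * (A ^ s) ^ r + t * (B ^ s) ^ r :=
        (convexOn_rpow hr).2 (Set.mem_Ici.2 (by positivity)) (Set.mem_Ici.2 (by positivity))
          (sub_nonneg.2 ht.2) ht.1 (by ring)

theorem norm_gradient_eq_norm_fderiv {F : Type*} [NormedAddCommGroup F] [InnerProductSpace ℝ F]
    [CompleteSpace F] (f : F → ℝ) (x : F) : ‖gradient f x‖ = ‖fderiv ℝ f x‖ :=
  (InnerProductSpace.toDual ℝ F).symm.norm_map _

theorem norm_fderiv_rpow_mean_rpow_le {E : Type*} [NormedAddCommGroup E] [NormedSpace ℝ E]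
    {f₀ f₁ : E → ℝ} {x : E} {s μ ν : ℝ} (hs : 1 ≤ s) (hμ : 0 ≤ μ) (hν : 0 ≤ ν) (hf₀ : DifferentiableAt ℝ f₀ x) (hf₁ : DifferentiableAt ℝ f₁ x)
    (h₀ : ∀ᶠ y in 𝓝 x, 0 ≤ f₀ y) (h₁ : ∀ᶠ y in 𝓝 x, 0 ≤ f₁ y)
    (hF : DifferentiableAt ℝ (fun y => (μ * f₀ y ^ s + ν * f₁ y ^ s) ^ (1 / s)) x) :
    ‖fderiv ℝ (fun y => (μ * f₀ y ^ s + ν * f₁ y ^ s) ^ (1 / s)) x‖ ^ s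
      ≤ μ * ‖fderiv ℝ f₀ x‖ ^ s + ν * ‖fderiv ℝ f₁ x‖ ^ s := by
  set g : E → ℝ := fun y => μ * f₀ y ^ s + ν * f₁ y ^ s
  set F : E → ℝ := fun y => g y ^ (1 / s)
  have hs0 : 0 < s := by linarith
  have hg : ∀ᶠ y in 𝓝 x, 0 ≤ g y := by
    filter_upwards [h₀, h₁] with y hy₀ hy₁
    positivity
  have hFs : (fun y => F y ^ s) =ᶠ[𝓝 x] g := by
    filter_upwards [hg] with y hy
    rw [← Real.rpow_mul hy, one_div_mul_cancel hs0.ne', Real.rpow_one]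
  have hderiv : (s * F x ^ (s - 1)) • fderiv ℝ F x
      = μ • (s * f₀ x ^ (s - 1)) • fderiv ℝ f₀ x + ν • (s * f₁ x ^ (s - 1)) • fderiv ℝ f₁ x :=
    ((hF.hasFDerivAt.rpow_const (Or.inr hs)).congr_of_eventuallyEq hFs.symm).unique
      (((hf₀.hasFDerivAt.rpow_const (Or.inr hs)).const_mul μ).add
        ((hf₁.hasFDerivAt.rpow_const (Or.inr hs)).const_mul ν))
  rcases (Real.rpow_nonneg hg.self_of_nhds (1 / s)).eq_or_lt with hFx | hFx
  · have hmin : IsLocalMin F x := by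
      filter_upwards [hg] with y hy
      change g x ^ (1 / s) ≤ g y ^ (1 / s)
      exact hFx ▸ Real.rpow_nonneg hy _
    rw [hmin.fderiv_eq_zero, norm_zero, Real.zero_rpow hs0.ne']
    positivity
  · refine rpow_le_of_rpow_sub_one_mul_le hs hμ hν h₀.self_of_nhds h₁.self_of_nhds
      (norm_nonneg _) (norm_nonneg _) (norm_nonneg _) hFx hFs.self_of_nhds ?_
    refine le_of_mul_le_mul_left ?_ hs0
    calc s * (F x ^ (s - 1) * ‖fderiv ℝ F x‖) = ‖(s * F x ^ (s - 1)) • fderiv ℝ F x‖ := by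
          rw [norm_smul, Real.norm_of_nonneg (by positivity), mul_assoc]
      _ ≤ s * (μ * f₀ x ^ (s - 1) * ‖fderiv ℝ f₀ x‖ + ν * f₁ x ^ (s - 1) * ‖fderiv ℝ f₁ x‖) := by
          rw [hderiv]
          refine (norm_add_le _ _).trans_eq ?_
          have := h₀.self_of_nhds
          have := h₁.self_of_nhds
          rw [norm_smul, norm_smul, norm_smul, norm_smul, Real.norm_of_nonneg hμ,
            Real.norm_of_nonneg hν, Real.norm_of_nonneg (by positivity : 0 ≤ s * f₀ x ^ (s - 1)),
            Real.norm_of_nonneg (by positivity : 0 ≤ s * f₁ x ^ (s - 1))]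
          ring

theorem statement_17_general {N : ℕ} (p : ℝ) (hp2 : 2 ≤ p) (Ω : Set (Euc N)) (hΩo : IsOpen Ω)
    (w₀ w₁ : Euc N → ℝ)
    (hw₀ : ContDiffOn ℝ 1 w₀ Ω) (hw₁ : ContDiffOn ℝ 1 w₁ Ω)
    (hw₀n : ∀ x ∈ Ω, 0 ≤ w₀ x) (hw₁n : ∀ x ∈ Ω, 0 ≤ w₁ x)
    (t : ℝ) (ht : t ∈ Set.Icc (0 : ℝ) 1) :
    ∀ x ∈ Ω,
      DifferentiableAt ℝ (fun y => ((1 - t) * w₀ y ^ (p / 2) + t * w₁ y ^ (p / 2)) ^ (2 / p)) x →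
      ‖gradient (fun y => ((1 - t) * w₀ y ^ (p / 2) + t * w₁ y ^ (p / 2)) ^ (2 / p)) x‖ ^ (p / 2)
          ≤ (1 - t) * ‖gradient w₀ x‖ ^ (p / 2) + t * ‖gradient w₁ x‖ ^ (p / 2) ∧
      ‖gradient (fun y => ((1 - t) * w₀ y ^ (p / 2) + t * w₁ y ^ (p / 2)) ^ (2 / p)) x‖ ^ p
          ≤ (1 - t) * ‖gradient w₀ x‖ ^ p + t * ‖gradient w₁ x‖ ^ p := by
  intro x hx hF
  have hs : 1 ≤ p / 2 := by linarith
  have hΩx : Ω ∈ 𝓝 x := hΩo.mem_nhds hx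
  have hpow := norm_fderiv_rpow_mean_rpow_le hs (sub_nonneg.2 ht.2) ht.1
    ((hw₀.differentiableOn one_ne_zero).differentiableAt hΩx)
    ((hw₁.differentiableOn one_ne_zero).differentiableAt hΩx)
    (eventually_of_mem hΩx hw₀n) (eventually_of_mem hΩx hw₁n) (by rwa [one_div_div])
  rw [one_div_div] at hpow
  simp only [norm_gradient_eq_norm_fderiv]
  exact ⟨hpow, rpow_le_convexCombination_of_rpow_le one_le_two (by ring) ht (norm_nonneg _)
    (norm_nonneg _) (norm_nonneg _) hpow⟩

/-- inequalities (4.8) and following, in the proof of Proposition 4.2: for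
`p ≥ 2`, nonnegative `C¹` functions `w₀, w₁` on a domain `Ω` and `t ∈ [0,1]`, setting
`w_t = ((1-t)w₀^{p/2} + t w₁^{p/2})^{2/p}`, at every point of `Ω` where `w_t` is differentiable
one has `|∇w_t|^{p/2} ≤ (1-t)|∇w₀|^{p/2} + t|∇w₁|^{p/2}` and consequently
`|∇w_t|^p ≤ (1-t)|∇w₀|^p + t|∇w₁|^p`. -/
theorem statement_17 {N : ℕ} (p : ℝ) (hp2 : 2 ≤ p) (Ω : Set (Euc N)) (hΩo : IsOpen Ω)
    (hΩc : IsConnected Ω) (w₀ w₁ : Euc N → ℝ)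
    (hw₀ : ContDiffOn ℝ 1 w₀ Ω) (hw₁ : ContDiffOn ℝ 1 w₁ Ω)
    (hw₀n : ∀ x ∈ Ω, 0 ≤ w₀ x) (hw₁n : ∀ x ∈ Ω, 0 ≤ w₁ x)
    (t : ℝ) (ht : t ∈ Set.Icc (0 : ℝ) 1) :
    ∀ x ∈ Ω,
      DifferentiableAt ℝ (fun y => ((1 - t) * w₀ y ^ (p / 2) + t * w₁ y ^ (p / 2)) ^ (2 / p)) x →
      ‖gradient (fun y => ((1 - t) * w₀ y ^ (p / 2) + t * w₁ y ^ (p / 2)) ^ (2 / p)) x‖ ^ (p / 2)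
          ≤ (1 - t) * ‖gradient w₀ x‖ ^ (p / 2) + t * ‖gradient w₁ x‖ ^ (p / 2) ∧
      ‖gradient (fun y => ((1 - t) * w₀ y ^ (p / 2) + t * w₁ y ^ (p / 2)) ^ (2 / p)) x‖ ^ p
          ≤ (1 - t) * ‖gradient w₀ x‖ ^ p + t * ‖gradient w₁ x‖ ^ p :=
  statement_17_general p hp2 Ω hΩo w₀ w₁ hw₀ hw₁ hw₀n hw₁n t ht
end
end
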